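/- arXiv:2402.03701 — 11 statements merged into one kernel-verified Lean document; each statement's English description precedes it below -/
import Mathlib

section
/- Let m ∈ ℝ^K be a probability vector with all entries strictly positive, and let ᾱ_s, ᾱ_{t|s} ∈ (0,1) with ᾱ_t := ᾱ_s ᾱ_{t|s}. Set A = ᾱ_s I + (1−ᾱ_s) 1 mᵀ and B = ᾱ_{t|s} I + (1−ᾱ_{t|s}) 1 mᵀ. For one-hot vectors x_0, x_t ∈ ℝ^K, define the posterior vector v := (B x_t ⊙ Aᵀ x_0) / ⟨x_t, (AB)ᵀ x_0⟩. Then: (i) if x_t = x_0, v = (1−λ_{t|s}) x_t + λ_{t|s} m, where λ_{t|s} := (1−ᾱ_s)(1−ᾱ_{t|s}) ⟨m, x_t⟩ / (ᾱ_t + (1−ᾱ_t) ⟨m, x_t⟩); and (ii) if x_t ≠ x_0, v = (1−μ_{t|s}) x_0 + μ_{t|s} ᾱ_{t|s} x_t + μ_{t|s}(1−ᾱ_{t|s}) m, where μ_{t|s} := (1−ᾱ_s)/(1−ᾱ_t). -/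
/-- The Bayes posterior vector `v = (B xt ⊙ Aᵀ x0) / ⟨xt, (AB)ᵀ x0⟩` of the
discrete-diffusion forward chain, with `A = ᾱ_s I + (1-ᾱ_s) 1mᵀ` and
`B = ᾱ_{t|s} I + (1-ᾱ_{t|s}) 1mᵀ`. -/
noncomputable def postVec {K : ℕ} (m : Fin K → ℝ) (as ats : ℝ) (xt x0 : Fin K → ℝ) :
    Fin K → ℝ :=
  fun k =>
    ((ats • (1 : Matrix (Fin K) (Fin K) ℝ) + (1 - ats) • Matrix.vecMulVec (1 : Fin K → ℝ) m).mulVec xt k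
        * (as • (1 : Matrix (Fin K) (Fin K) ℝ) + (1 - as) • Matrix.vecMulVec (1 : Fin K → ℝ) m).transpose.mulVec x0 k)
      / (∑ j, xt j *
          (((as • (1 : Matrix (Fin K) (Fin K) ℝ) + (1 - as) • Matrix.vecMulVec (1 : Fin K → ℝ) m)
            * (ats • (1 : Matrix (Fin K) (Fin K) ℝ) + (1 - ats) • Matrix.vecMulVec (1 : Fin K → ℝ) m)).transpose.mulVec x0) j)

/-!
Since `Σ m = 1`, `(𝟙mᵀ)² = 𝟙mᵀ`, so the matrices `α I + (1 - α) 𝟙mᵀ` multiply by multiplying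
their parameters: `AB` is the matrix of `ᾱ_t = ᾱ_s ᾱ_{t|s}`. Together with
`(α I + (1 - α) 𝟙mᵀ) x = α x + (1 - α) ⟨m, x⟩ 𝟙` and its transposed version, this gives
`v_k = (ᾱ_{t|s} x_t,k + (1 - ᾱ_{t|s}) ⟨m, x_t⟩)(ᾱ_s x_0,k + (1 - ᾱ_s) m_k)
  / (ᾱ_t ⟨x_t, x_0⟩ + (1 - ᾱ_t) ⟨m, x_t⟩)` for every `x_0` summing to one. For one-hot
`x_t = e_i`, `x_0 = e_j`, both cases are then polynomial identities modulo
`e_i ⊙ e_i = e_i`, `e_i ⊙ m = m_i e_i` and, for `i ≠ j`, `e_i ⊙ e_j = 0`.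
-/

open Matrix

section MixMatrix

variable {R n : Type*} [CommRing R] [Fintype n] [DecidableEq n]

def mixMatrix (m : n → R) (α : R) : Matrix n n R :=
  α • 1 + (1 - α) • vecMulVec 1 m

theorem mixMatrix_mulVec (m : n → R) (α : R) (x : n → R) :
    mixMatrix m α *ᵥ x = α • x + ((1 - α) * (m ⬝ᵥ x)) • 1 := by
  simp only [mixMatrix, add_mulVec, smul_mulVec, one_mulVec, vecMulVec_mulVec, op_smul_eq_smul,
    smul_smul]

theorem mixMatrix_transpose_mulVec (m : n → R) (α : R) (x : n → R) :
    (mixMatrix m α)ᵀ *ᵥ x = α • x + ((1 - α) * ∑ i, x i) • m := by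
  simp only [mixMatrix, transpose_add, transpose_smul, transpose_one, transpose_vecMulVec,
    add_mulVec, smul_mulVec, one_mulVec, vecMulVec_mulVec, op_smul_eq_smul, smul_smul,
    one_dotProduct]

theorem mixMatrix_mul {m : n → R} (hm : ∑ i, m i = 1) (α β : R) :
    mixMatrix m α * mixMatrix m β = mixMatrix m (α * β) := by
  have hmm : vecMulVec (1 : n → R) m * vecMulVec 1 m = vecMulVec 1 m := by
    rw [vecMulVec_mul_vecMulVec, dotProduct_one, hm, one_smul]
  simp only [mixMatrix, add_mul, mul_add, smul_mul_smul_comm, mul_one, one_mul, hmm]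
  module

end MixMatrix

section OneHot

variable {n R : Type*} [DecidableEq n]

theorem Pi.sum_single_one_apply [Fintype n] [AddCommMonoid R] [One R] (i : n) :
    ∑ k, (Pi.single i 1 : n → R) k = 1 := by
  simp

variable [MulZeroOneClass R]

theorem Pi.single_one_apply_mul_self (i k : n) :
    (Pi.single i 1 : n → R) k * (Pi.single i 1 : n → R) k = (Pi.single i 1 : n → R) k := by
  rcases eq_or_ne k i with rfl | hk <;> simp [*]

theorem Pi.single_one_apply_mul (i k : n) (f : n → R) :
    (Pi.single i 1 : n → R) k * f k = f i * (Pi.single i 1 : n → R) k := by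
  rcases eq_or_ne k i with rfl | hk <;> simp [*]

theorem Pi.single_one_apply_mul_single_one_of_ne {i j : n} (k : n) (hij : i ≠ j) :
    (Pi.single i 1 : n → R) k * (Pi.single j 1 : n → R) k = 0 := by
  rcases eq_or_ne k i with rfl | hk <;> simp [*]

end OneHot

theorem postVec_eq_mixMatrix {K : ℕ} (m : Fin K → ℝ) (as ats : ℝ) (xt x0 : Fin K → ℝ) :
    postVec m as ats xt x0 = fun k =>
      (mixMatrix m ats *ᵥ xt) k * ((mixMatrix m as)ᵀ *ᵥ x0) k
        / (xt ⬝ᵥ ((mixMatrix m as * mixMatrix m ats)ᵀ *ᵥ x0)) :=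
  rfl

theorem postVec_apply {K : ℕ} {m : Fin K → ℝ} (hm : ∑ i, m i = 1) (as ats : ℝ)
    (xt : Fin K → ℝ) {x0 : Fin K → ℝ} (hx0 : ∑ i, x0 i = 1) (k : Fin K) :
    postVec m as ats xt x0 k =
      (ats * xt k + (1 - ats) * (m ⬝ᵥ xt)) * (as * x0 k + (1 - as) * m k)
        / (as * ats * (xt ⬝ᵥ x0) + (1 - as * ats) * (m ⬝ᵥ xt)) := by
  rw [postVec_eq_mixMatrix, mixMatrix_mul hm, mixMatrix_mulVec, mixMatrix_transpose_mulVec,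
    mixMatrix_transpose_mulVec, hx0, dotProduct_add, dotProduct_smul, dotProduct_smul,
    dotProduct_comm xt m]
  simp [smul_eq_mul]

theorem postVec_single_self {K : ℕ} {m : Fin K → ℝ} (hm : ∑ i, m i = 1) (as ats : ℝ) (i : Fin K)
    (hD : as * ats + (1 - as * ats) * m i ≠ 0) (k : Fin K) :
    postVec m as ats (Pi.single i 1) (Pi.single i 1) k
      = (1 - (1 - as) * (1 - ats) * m i / (as * ats + (1 - as * ats) * m i))
          * (Pi.single i 1 : Fin K → ℝ) k
        + ((1 - as) * (1 - ats) * m i / (as * ats + (1 - as * ats) * m i)) * m k := by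
  rw [postVec_apply hm _ _ _ (Pi.sum_single_one_apply i), dotProduct_single_one,
    single_one_dotProduct, Pi.single_eq_same, mul_one, div_eq_iff hD]
  linear_combination
    ((Pi.single i 1 : Fin K → ℝ) k - m k) * div_mul_cancel₀ ((1 - as) * (1 - ats) * m i) hD
    + as * ats * Pi.single_one_apply_mul_self (R := ℝ) i k
    + ats * (1 - as) * Pi.single_one_apply_mul i k m

theorem postVec_single_of_ne {K : ℕ} {m : Fin K → ℝ} (hm : ∑ i, m i = 1) (as ats : ℝ)
    {i j : Fin K} (hij : i ≠ j) (hab : 1 - as * ats ≠ 0) (hmi : m i ≠ 0) (k : Fin K) :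
    postVec m as ats (Pi.single i 1) (Pi.single j 1) k
        = (1 - (1 - as) / (1 - as * ats)) * (Pi.single j 1 : Fin K → ℝ) k
          + ((1 - as) / (1 - as * ats)) * ats * (Pi.single i 1 : Fin K → ℝ) k
          + ((1 - as) / (1 - as * ats)) * (1 - ats) * m k := by
  rw [postVec_apply hm _ _ _ (Pi.sum_single_one_apply j), dotProduct_single_one,
    single_one_dotProduct, Pi.single_eq_of_ne hij, mul_zero, zero_add,
    div_eq_iff (mul_ne_zero hab hmi)]
  linear_combination
    (m i * (Pi.single j 1 : Fin K → ℝ) k - ats * m i * (Pi.single i 1 : Fin K → ℝ) k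
        - (1 - ats) * m i * m k)
        * div_mul_cancel₀ (1 - as) hab
      + as * ats * Pi.single_one_apply_mul_single_one_of_ne (R := ℝ) k hij
      + (1 - as) * ats * Pi.single_one_apply_mul i k m

theorem posterior_closed_form_general
    {K : ℕ} (m : Fin K → ℝ)
    (hm_pos : ∀ k, 0 < m k) (hm_sum : ∑ k, m k = 1)
    (as ats : ℝ) (has : 0 < as ∧ as < 1) (hats : 0 < ats ∧ ats < 1)
    (x0 xt : Fin K → ℝ)
    (hx0 : ∃ i, x0 = Pi.single i 1) (hxt : ∃ i, xt = Pi.single i 1) :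
    (xt = x0 →
      ∀ k, postVec m as ats xt x0 k
        = (1 - (1 - as) * (1 - ats) * (∑ i, m i * xt i)
              / (as * ats + (1 - as * ats) * ∑ i, m i * xt i)) * xt k
          + ((1 - as) * (1 - ats) * (∑ i, m i * xt i)
              / (as * ats + (1 - as * ats) * ∑ i, m i * xt i)) * m k)
    ∧ (xt ≠ x0 →
      ∀ k, postVec m as ats xt x0 k
        = (1 - (1 - as) / (1 - as * ats)) * x0 k
          + ((1 - as) / (1 - as * ats)) * ats * xt k
          + ((1 - as) / (1 - as * ats)) * (1 - ats) * m k) := by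
  obtain ⟨i, rfl⟩ := hxt
  have hmi := hm_pos i
  have hab_pos : 0 < as * ats := mul_pos has.1 hats.1
  have hab_lt : as * ats < 1 := mul_lt_one_of_nonneg_of_lt_one_left has.1.le has.2 hats.2.le
  have hp : ∑ k, m k * (Pi.single i 1 : Fin K → ℝ) k = m i := dotProduct_single_one m i
  refine ⟨?_, fun hne => ?_⟩
  · rintro rfl
    rw [hp]
    exact postVec_single_self hm_sum as ats i
      (add_pos hab_pos (mul_pos (sub_pos.2 hab_lt) hmi)).ne'
  · obtain ⟨j, rfl⟩ := hx0
    have hij : i ≠ j := by rintro rfl; exact hne rfl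
    exact postVec_single_of_ne hm_sum as ats hij (by linarith) hmi.ne'

/-- Closed form of the posterior `q(x_s | x_t, x_0)` of discrete diffusion:
if `x_t = x_0` it is `(1-λ_{t|s}) x_t + λ_{t|s} m`, and if `x_t ≠ x_0` it is
`(1-μ_{t|s}) x_0 + μ_{t|s} ᾱ_{t|s} x_t + μ_{t|s}(1-ᾱ_{t|s}) m`. -/
theorem posterior_closed_form
    {K : ℕ} (hK : 1 ≤ K) (m : Fin K → ℝ)
    (hm_pos : ∀ k, 0 < m k) (hm_sum : ∑ k, m k = 1)
    (as ats : ℝ) (has : 0 < as ∧ as < 1) (hats : 0 < ats ∧ ats < 1)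
    (x0 xt : Fin K → ℝ)
    (hx0 : ∃ i, x0 = Pi.single i 1) (hxt : ∃ i, xt = Pi.single i 1) :
    (xt = x0 →
      ∀ k, postVec m as ats xt x0 k
        = (1 - (1 - as) * (1 - ats) * (∑ i, m i * xt i)
              / (as * ats + (1 - as * ats) * ∑ i, m i * xt i)) * xt k
          + ((1 - as) * (1 - ats) * (∑ i, m i * xt i)
              / (as * ats + (1 - as * ats) * ∑ i, m i * xt i)) * m k)
    ∧ (xt ≠ x0 →
      ∀ k, postVec m as ats xt x0 k
        = (1 - (1 - as) / (1 - as * ats)) * x0 k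
          + ((1 - as) / (1 - as * ats)) * ats * xt k
          + ((1 - as) / (1 - as * ats)) * (1 - ats) * m k) :=
  posterior_closed_form_general m hm_pos hm_sum as ats has hats x0 xt hx0 hxt
end

section
/- Let m ∈ ℝ^K be a probability vector with all entries strictly positive, ᾱ_s, ᾱ_{t|s} ∈ (0,1), ᾱ_t := ᾱ_s ᾱ_{t|s}, and let x_t ∈ ℝ^K be one-hot. For each one-hot x_0, let v(x_0) denote the Bayes posterior vector (B x_t ⊙ Aᵀ x_0)/⟨x_t,(AB)ᵀ x_0⟩ with A = ᾱ_s I + (1−ᾱ_s)1mᵀ and B = ᾱ_{t|s} I + (1−ᾱ_{t|s})1mᵀ. Let f ∈ ℝ^K be any probability vector and define p := Σ_{k=1}^K v(e_k) f_k. Then p = (1−μ_{t|s}) f + (μ_{t|s} ᾱ_{t|s} + γ) x_t + (μ_{t|s}(1−ᾱ_{t|s}) − γ) m, where μ_{t|s} := (1−ᾱ_s)/(1−ᾱ_t), λ_{t|s} := (1−ᾱ_s)(1−ᾱ_{t|s})⟨m, x_t⟩/(ᾱ_t + (1−ᾱ_t)⟨m, x_t⟩), and γ := (μ_{t|s} −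 λ_{t|s} − μ_{t|s} ᾱ_{t|s}) ⟨f, x_t⟩. -/
/-- `μ_{t|s} = (1-ᾱ_s)/(1-ᾱ_t)` with `ᾱ_t = ᾱ_s ᾱ_{t|s}`. -/
noncomputable def muCoef (as ats : ℝ) : ℝ := (1 - as) / (1 - as * ats)

/-- `λ_{t|s} = (1-ᾱ_s)(1-ᾱ_{t|s})⟨m, x_t⟩ / (ᾱ_t + (1-ᾱ_t)⟨m, x_t⟩)`. -/
noncomputable def lambdaCoef {K : ℕ} (m : Fin K → ℝ) (as ats : ℝ) (xt : Fin K → ℝ) : ℝ :=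
  (1 - as) * (1 - ats) * (∑ i, m i * xt i)
    / (as * ats + (1 - as * ats) * ∑ i, m i * xt i)

/-! The matrices `A = Q(ᾱ_s)` and `B = Q(ᾱ_{t|s})` belong to the family
`Q(a) = a I + (1 - a) 1 mᵀ`, which is closed under multiplication, `Q(a) Q(b) = Q(ab)`,
because `mᵀ 1 = 1`. Hence for `x_t = e_i` the posterior denominator
`⟨x_t, (AB)ᵀ e_k⟩ = Q(ᾱ_t)_{k i}` takes only two values, according as `k = i` or not, so
`Σ_k f_k / Q(ᾱ_t)_{k i}` is a correction in `f_i` plus a multiple of `Σ_k f_k = 1`. What remains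
is a rational identity in `ᾱ_s, ᾱ_{t|s}, m_i, m_j, f_i, f_j`, checked separately for `j = i` and
`j ≠ i`. -/

open Finset Matrix

section MixingMatrix

variable {ι R : Type*} [DecidableEq ι]

def mixingMatrix [CommRing R] (m : ι → R) (a : R) : Matrix ι ι R :=
  a • 1 + (1 - a) • vecMulVec 1 m

theorem mixingMatrix_apply [CommRing R] (m : ι → R) (a : R) (i j : ι) :
    mixingMatrix m a i j = (if i = j then a else 0) + (1 - a) * m j := by
  simp [mixingMatrix, Matrix.one_apply]

theorem mixingMatrix_mul [Fintype ι] [CommRing R] {m : ι → R} (hm : ∑ i, m i = 1) (a b : R) :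
    mixingMatrix m a * mixingMatrix m b = mixingMatrix m (a * b) := by
  have hidem : vecMulVec (1 : ι → R) m * vecMulVec 1 m = vecMulVec 1 m := by
    rw [vecMulVec_mul_vecMulVec, dotProduct_one, hm, one_smul]
  simp only [mixingMatrix, add_mul, mul_add, smul_mul_smul_comm, Matrix.one_mul, Matrix.mul_one,
    hidem]
  module

theorem sum_mixingMatrix_mul [Fintype ι] [CommRing R] (m f : ι → R) (a : R) (j : ι) :
    ∑ k, mixingMatrix m a k j * f k = a * f j + (1 - a) * m j * ∑ k, f k := by
  simp [mixingMatrix_apply, add_mul, sum_add_distrib, ite_mul, mul_sum, mul_assoc]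

theorem sum_div_mixingMatrix [Fintype ι] [Field R] (m g : ι → R) {c : R} (i : ι)
    (hoff : (1 - c) * m i ≠ 0) (hdiag : c + (1 - c) * m i ≠ 0) :
    ∑ k, g k / mixingMatrix m c k i
      = (∑ k, g k) / ((1 - c) * m i) - g i * c / ((1 - c) * m i * (c + (1 - c) * m i)) := by
  have hterm : ∀ k, g k / mixingMatrix m c k i
      = g k / ((1 - c) * m i) - if k = i then g i * c / ((1 - c) * m i * (c + (1 - c) * m i))
          else 0 := by
    intro k
    rw [mixingMatrix_apply]
    by_cases hk : k = i
    · subst hk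
      rw [if_pos rfl, if_pos rfl, div_sub_div _ _ hoff (mul_ne_zero hoff hdiag),
        div_eq_div_iff hdiag (mul_ne_zero hoff (mul_ne_zero hoff hdiag))]
      ring
    · simp [hk]
  simp only [hterm, sum_sub_distrib, ← sum_div, sum_ite_eq', mem_univ, if_true]

end MixingMatrix

theorem postVec_single_single {K : ℕ} {m : Fin K → ℝ} (hm : ∑ l, m l = 1) (as ats : ℝ)
    (i k j : Fin K) :
    postVec m as ats (Pi.single i 1) (Pi.single k 1) j
      = mixingMatrix m ats j i * mixingMatrix m as k j / mixingMatrix m (as * ats) k i := by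
  change (mixingMatrix m ats *ᵥ Pi.single i 1) j * ((mixingMatrix m as)ᵀ *ᵥ Pi.single k 1) j
      / (Pi.single i 1 ⬝ᵥ (mixingMatrix m as * mixingMatrix m ats)ᵀ *ᵥ Pi.single k 1) = _
  simp [mixingMatrix_mul hm]

theorem sum_postVec_single_mul {K : ℕ} {m : Fin K → ℝ} (hm : ∑ l, m l = 1) (as ats : ℝ)
    (f : Fin K → ℝ) (i j : Fin K) :
    ∑ k, postVec m as ats (Pi.single i 1) (Pi.single k 1) j * f k
      = mixingMatrix m ats j i
          * ∑ k, mixingMatrix m as k j * f k / mixingMatrix m (as * ats) k i := by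
  rw [mul_sum]
  congr with k
  rw [postVec_single_single hm]
  ring

theorem backward_parameterization_closed_form_general
    {K : ℕ} (m : Fin K → ℝ)
    (hm_pos : ∀ k, 0 < m k) (hm_sum : ∑ k, m k = 1)
    (as ats : ℝ) (has : 0 < as ∧ as < 1) (hats : 0 < ats ∧ ats < 1)
    (xt : Fin K → ℝ) (hxt : ∃ i, xt = Pi.single i 1)
    (f : Fin K → ℝ) (hf_sum : ∑ k, f k = 1) :
    (fun j => ∑ k, postVec m as ats xt (Pi.single k 1) j * f k)
      = fun j =>
        (1 - muCoef as ats) * f j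
          + (muCoef as ats * ats
              + (muCoef as ats - lambdaCoef m as ats xt - muCoef as ats * ats)
                * (∑ i, f i * xt i)) * xt j
          + (muCoef as ats * (1 - ats)
              - (muCoef as ats - lambdaCoef m as ats xt - muCoef as ats * ats)
                * (∑ i, f i * xt i)) * m j := by
  obtain ⟨i, rfl⟩ := hxt
  have hmi := hm_pos i
  have hprod : 0 < as * ats := mul_pos has.1 hats.1
  have hD : 0 < 1 - as * ats := by nlinarith
  have hoff : (1 - as * ats) * m i ≠ 0 := by positivity
  have hdiag : as * ats + (1 - as * ats) * m i ≠ 0 := by positivity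
  have hf_xt : ∑ l, f l * (Pi.single i 1 : Fin K → ℝ) l = f i := dotProduct_single_one f i
  have hm_xt : ∑ l, m l * (Pi.single i 1 : Fin K → ℝ) l = m i := dotProduct_single_one m i
  -- the denominators in the normal form `field_simp` puts them in
  have hD' : 1 - ats * as ≠ 0 := by rw [mul_comm]; exact hD.ne'
  have hdiag' : ats * as + m i * (1 - ats * as) ≠ 0 := by rwa [mul_comm ats, mul_comm (m i)]
  funext j
  rw [sum_postVec_single_mul hm_sum, sum_div_mixingMatrix _ _ i hoff hdiag, sum_mixingMatrix_mul,
    hf_sum]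
  simp only [hf_xt, hm_xt, muCoef, lambdaCoef, mixingMatrix_apply]
  by_cases hji : j = i
  · subst hji
    simp only [if_true, Pi.single_eq_same]
    field_simp
    ring
  · simp only [hji, if_false, Pi.single_eq_of_ne hji, Ne.symm hji]
    field_simp
    ring

/-- Closed form of the marginalized backward probability
`p_θ(x_s | x_t) = Σ_{x_0} q(x_s | x_t, x_0) p_θ(x_0 | x_t)`:
it equals `(1-μ) f + (μ ᾱ_{t|s} + γ) x_t + (μ(1-ᾱ_{t|s}) - γ) m`,
where `γ = (μ - λ - μ ᾱ_{t|s}) ⟨f, x_t⟩`. -/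
theorem backward_parameterization_closed_form
    {K : ℕ} (hK : 1 ≤ K) (m : Fin K → ℝ)
    (hm_pos : ∀ k, 0 < m k) (hm_sum : ∑ k, m k = 1)
    (as ats : ℝ) (has : 0 < as ∧ as < 1) (hats : 0 < ats ∧ ats < 1)
    (xt : Fin K → ℝ) (hxt : ∃ i, xt = Pi.single i 1)
    (f : Fin K → ℝ) (hf_nonneg : ∀ k, 0 ≤ f k) (hf_sum : ∑ k, f k = 1) :
    (fun j => ∑ k, postVec m as ats xt (Pi.single k 1) j * f k)
      = fun j =>
        (1 - muCoef as ats) * f j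
          + (muCoef as ats * ats
              + (muCoef as ats - lambdaCoef m as ats xt - muCoef as ats * ats)
                * (∑ i, f i * xt i)) * xt j
          + (muCoef as ats * (1 - ats)
              - (muCoef as ats - lambdaCoef m as ats xt - muCoef as ats * ats)
                * (∑ i, f i * xt i)) * m j :=
  backward_parameterization_closed_form_general m hm_pos hm_sum as ats has hats xt hxt f hf_sum
end

section
/- Under the setup of the discrete-diffusion posterior: let m ∈ ℝ^K be a strictly positive probability vector, ᾱ_s, ᾱ_{t|s} ∈ (0,1), ᾱ_t := ᾱ_s ᾱ_{t|s}, x_0 and x_t one-hot vectors, f ∈ ℝ^K a probability vector. Let v(x_0) := (B x_t ⊙ Aᵀ x_0)/⟨x_t,(AB)ᵀ x_0⟩ with A = ᾱ_s I + (1−ᾱ_s)1mᵀ and B = ᾱ_{t|s} I + (1−ᾱ_{t|s})1mᵀ, and let p := Σ_k v(e_k) f_k. Then p − v(x_0) = (1−μ_{t|s}) [ f − x_0 + φ_{t|s} ⟨f − x_0, x_t⟩ (x_t − m) ], where μ_{t|s} := (1−ᾱ_s)/(1−ᾱ_t) and φ_{t|s} := (1−ᾱ_s) ᾱ_{t|s}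 / (ᾱ_t + (1−ᾱ_t) ⟨x_t, m⟩). The identity holds both when x_t = x_0 and when x_t ≠ x_0. -/
open Matrix

theorem sum_smul_sub_eq_of_affine_on_single {ι M : Type*} [Fintype ι] [DecidableEq ι]
    [AddCommGroup M] [Module ℝ M] {v : ι → M} {c : M} {L : (ι → ℝ) →ₗ[ℝ] M}
    (hv : ∀ k, v k = c + L (Pi.single k 1)) {f : ι → ℝ} (hf : ∑ k, f k = 1) (i : ι) :
    ∑ k, f k • v k - v i = L (f - Pi.single i 1) := by
  have hLf : ∑ k, f k • L (Pi.single k 1) = L f := by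
    conv_rhs => rw [pi_eq_sum_univ' f]
    simp only [map_sum, map_smul]
  simp only [hv, smul_add, Finset.sum_add_distrib, ← Finset.sum_smul, hf, one_smul, hLf, map_sub]
  abel

noncomputable def transitionMatrix {K : ℕ} (m : Fin K → ℝ) (α : ℝ) : Matrix (Fin K) (Fin K) ℝ :=
  α • 1 + (1 - α) • vecMulVec 1 m

section

variable {K : ℕ} (m : Fin K → ℝ)

theorem postVec_eq (as ats : ℝ) (xt x0 : Fin K → ℝ) :
    postVec m as ats xt x0 = fun k =>
      (transitionMatrix m ats *ᵥ xt) k * ((transitionMatrix m as)ᵀ *ᵥ x0) k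
        / (xt ⬝ᵥ ((transitionMatrix m as * transitionMatrix m ats)ᵀ *ᵥ x0)) :=
  rfl

theorem transitionMatrix_mulVec (α : ℝ) (x : Fin K → ℝ) :
    transitionMatrix m α *ᵥ x = α • x + ((1 - α) * (m ⬝ᵥ x)) • 1 := by
  rw [transitionMatrix, add_mulVec, smul_mulVec, smul_mulVec, one_mulVec, vecMulVec_mulVec,
    op_smul_eq_smul, smul_smul]

theorem transitionMatrix_transpose_mulVec (α : ℝ) (x : Fin K → ℝ) :
    (transitionMatrix m α)ᵀ *ᵥ x = α • x + ((1 - α) * ∑ k, x k) • m := by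
  rw [transitionMatrix, transpose_add, transpose_smul, transpose_smul, transpose_one,
    transpose_vecMulVec, add_mulVec, smul_mulVec, smul_mulVec, one_mulVec, vecMulVec_mulVec,
    op_smul_eq_smul, smul_smul, one_dotProduct]

theorem postVec_single_apply (hm : ∑ k, m k = 1) (as ats : ℝ) (it : Fin K) {x0 : Fin K → ℝ}
    (hx0 : ∑ k, x0 k = 1) (j : Fin K) :
    postVec m as ats (Pi.single it 1) x0 j =
      (ats * (if j = it then 1 else 0) + (1 - ats) * m it) * (as * x0 j + (1 - as) * m j)
        / (as * ats * x0 it + (1 - as * ats) * m it) := by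
  have hA : (transitionMatrix m as)ᵀ *ᵥ x0 = as • x0 + (1 - as) • m := by
    rw [transitionMatrix_transpose_mulVec, hx0, mul_one]
  have hA_sum : ∑ k, ((transitionMatrix m as)ᵀ *ᵥ x0) k = 1 := by
    simp only [hA, Pi.add_apply, Pi.smul_apply, smul_eq_mul, Finset.sum_add_distrib,
      ← Finset.mul_sum, hx0, hm]
    ring
  have hAB : (transitionMatrix m as * transitionMatrix m ats)ᵀ *ᵥ x0
      = ats • (as • x0 + (1 - as) • m) + (1 - ats) • m := by
    rw [transpose_mul, ← mulVec_mulVec, transitionMatrix_transpose_mulVec, hA_sum, mul_one, hA]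
  rw [postVec_eq, hAB, transitionMatrix_mulVec, hA, single_one_dotProduct, dotProduct_single_one]
  simp only [Pi.add_apply, Pi.smul_apply, smul_eq_mul, Pi.one_apply, Pi.single_apply]
  ring

noncomputable def postGap (as ats : ℝ) (xt : Fin K → ℝ) : (Fin K → ℝ) →ₗ[ℝ] Fin K → ℝ where
  toFun x j := (1 - (1 - as) / (1 - as * ats))
    * (x j + (1 - as) * ats / (as * ats + (1 - as * ats) * ∑ i, xt i * m i)
      * (∑ i, x i * xt i) * (xt j - m j))
  map_add' x y := by
    ext j
    simp only [Pi.add_apply, add_mul, Finset.sum_add_distrib]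
    ring
  map_smul' r x := by
    ext j
    simp only [Pi.smul_apply, smul_eq_mul, RingHom.id_apply, mul_assoc, ← Finset.mul_sum]
    ring

theorem postGap_apply (as ats : ℝ) (xt x : Fin K → ℝ) (j : Fin K) :
    postGap m as ats xt x j = (1 - (1 - as) / (1 - as * ats))
      * (x j + (1 - as) * ats / (as * ats + (1 - as * ats) * ∑ i, xt i * m i)
        * (∑ i, x i * xt i) * (xt j - m j)) :=
  rfl

theorem exists_postVec_single_eq_add_postGap (hm : ∑ k, m k = 1) (as ats : ℝ) (it : Fin K)
    (hc : 1 - as * ats ≠ 0) (hmi : m it ≠ 0) (hD : as * ats + (1 - as * ats) * m it ≠ 0) :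
    ∃ c, ∀ k, postVec m as ats (Pi.single it 1) (Pi.single k 1)
      = c + postGap m as ats (Pi.single it 1) (Pi.single k 1) := by
  refine ⟨fun j => (ats * (if j = it then 1 else 0) + (1 - ats) * m it) * ((1 - as) * m j)
    / ((1 - as * ats) * m it), fun k => ?_⟩
  ext j
  rw [postVec_single_apply m hm _ _ _ (by simp), Pi.add_apply, postGap_apply]
  have hD0 : (1 - as * ats) * m it ≠ 0 := mul_ne_zero hc hmi
  simp only [Pi.single_apply, mul_ite, mul_one, mul_zero, ite_mul, one_mul, zero_mul,
    Finset.sum_ite_eq', Finset.mem_univ, if_true]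
  rcases eq_or_ne k it with rfl | hk
  · split_ifs <;> grind
  · simp only [hk.symm, if_false, zero_add]
    split_ifs <;> grind

end

theorem backward_minus_posterior_closed_form_general
    {K : ℕ} (m : Fin K → ℝ)
    (hm_pos : ∀ k, 0 < m k) (hm_sum : ∑ k, m k = 1)
    (as ats : ℝ) (has : 0 < as ∧ as < 1) (hats : 0 < ats ∧ ats < 1)
    (x0 xt : Fin K → ℝ)
    (hx0 : ∃ i, x0 = Pi.single i 1) (hxt : ∃ i, xt = Pi.single i 1)
    (f : Fin K → ℝ) (hf_sum : ∑ k, f k = 1) :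
    ∀ j, (∑ k, postVec m as ats xt (Pi.single k 1) j * f k) - postVec m as ats xt x0 j
      = (1 - (1 - as) / (1 - as * ats))
          * (f j - x0 j
            + (1 - as) * ats / (as * ats + (1 - as * ats) * ∑ i, xt i * m i)
              * (∑ i, (f i - x0 i) * xt i) * (xt j - m j)) := by
  obtain ⟨i0, rfl⟩ := hx0
  obtain ⟨it, rfl⟩ := hxt
  have hc : 0 < 1 - as * ats :=
    sub_pos.2 (mul_lt_one_of_nonneg_of_lt_one_left has.1.le has.2 hats.2.le)
  have hD : 0 < as * ats + (1 - as * ats) * m it :=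
    add_pos (mul_pos has.1 hats.1) (mul_pos hc (hm_pos it))
  obtain ⟨c, hv⟩ :=
    exists_postVec_single_eq_add_postGap m hm_sum as ats it hc.ne' (hm_pos it).ne' hD.ne'
  intro j
  have key := congrFun (sum_smul_sub_eq_of_affine_on_single hv hf_sum i0) j
  rw [Pi.sub_apply, Finset.sum_apply] at key
  simp only [Pi.smul_apply, smul_eq_mul, mul_comm (f _)] at key
  exact key

/-- Proposition 3: the difference between the marginalized backward probability
`p = Σ_k v(e_k) f_k` and the true posterior `v(x_0)` satisfies
`p − v(x_0) = (1−μ_{t|s})[f − x_0 + φ_{t|s} ⟨f − x_0, x_t⟩ (x_t − m)]`, where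
`μ_{t|s} = (1−ᾱ_s)/(1−ᾱ_t)` and
`φ_{t|s} = (1−ᾱ_s)ᾱ_{t|s} / (ᾱ_t + (1−ᾱ_t)⟨x_t, m⟩)`, both when `x_t = x_0`
and when `x_t ≠ x_0`. -/
theorem backward_minus_posterior_closed_form
    {K : ℕ} (hK : 1 ≤ K) (m : Fin K → ℝ)
    (hm_pos : ∀ k, 0 < m k) (hm_sum : ∑ k, m k = 1)
    (as ats : ℝ) (has : 0 < as ∧ as < 1) (hats : 0 < ats ∧ ats < 1)
    (x0 xt : Fin K → ℝ)
    (hx0 : ∃ i, x0 = Pi.single i 1) (hxt : ∃ i, xt = Pi.single i 1)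
    (f : Fin K → ℝ) (hf_nonneg : ∀ k, 0 ≤ f k) (hf_sum : ∑ k, f k = 1) :
    ∀ j, (∑ k, postVec m as ats xt (Pi.single k 1) j * f k) - postVec m as ats xt x0 j
      = (1 - (1 - as) / (1 - as * ats))
          * (f j - x0 j
            + (1 - as) * ats / (as * ats + (1 - as * ats) * ∑ i, xt i * m i)
              * (∑ i, (f i - x0 i) * xt i) * (xt j - m j)) :=
  backward_minus_posterior_closed_form_general m hm_pos hm_sum as ats has hats x0 xt hx0 hxt f
    hf_sum
end

section
/- Let 𝒳 be a finite set and fix x_0 ∈ 𝒳. Let q_t(· | x_0) be a probability mass function on 𝒳 and, for each x_t ∈ 𝒳, let q_s(· | x_t, x_0) be a probability mass function on 𝒳. Let p_t, p_s(· | x_t) for each x_t, and p_0(· | x_s) for each x_s be strictly positive probability mass functions on 𝒳, and define the model marginal p(x_0) := Σ_{x_t, x_s} p_t(x_t) p_s(x_s | x_t) p_0(x_0 | x_s). Then log p(x_0) ≥ −D_KL(q_t(·|x_0) ∥ p_t) + Σ_{x_s} q_s^{marg}(x_s | x_0) log p_0(x_0 | x_s) − Σ_{x_t} q_t(x_t |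 x_0) D_KL(q_s(·|x_t,x_0) ∥ p_s(·|x_t)), where q_s^{marg}(x_s | x_0) := Σ_{x_t} q_t(x_t | x_0) q_s(x_s | x_t, x_0). -/
/-- Kullback–Leibler divergence between probability mass functions on a finite
set (with the convention `0 · log 0 = 0`, which holds automatically in Lean). -/
noncomputable def KLdiv {X : Type*} [Fintype X] (q p : X → ℝ) : ℝ :=
  ∑ x, q x * Real.log (q x / p x)

lemma neg_KLdiv {X : Type*} [Fintype X] (q p : X → ℝ) :
    -KLdiv q p = ∑ x, q x * Real.log (p x / q x) := by
  rw [KLdiv, ← Finset.sum_neg_distrib]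
  apply Finset.sum_congr rfl
  intro x _
  rw [show p x / q x = (q x / p x)⁻¹ by rw [inv_div], Real.log_inv]
  ring

/-- Gibbs-type inequality: `∑ q log(p/q) ≤ log (∑ p)`. -/
lemma gibbs_aux {X : Type*} [Fintype X] [Nonempty X] (q p : X → ℝ)
    (hq : ∀ x, 0 ≤ q x) (hq1 : ∑ x, q x = 1) (hp : ∀ x, 0 < p x) :
    ∑ x, q x * Real.log (p x / q x) ≤ Real.log (∑ x, p x) := by
  have hS : 0 < ∑ x, p x := Finset.sum_pos (fun x _ => hp x) Finset.univ_nonempty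
  have key : ∀ x, q x * (Real.log (p x / q x) - Real.log (∑ y, p y))
      ≤ p x / (∑ y, p y) - q x := by
    intro x
    rcases eq_or_lt_of_le (hq x) with h | h
    · simp [← h]
      exact div_nonneg (hp x).le hS.le
    · have hpx := hp x
      have hpos : 0 < p x / (q x * ∑ y, p y) := by positivity
      have hlog := Real.log_le_sub_one_of_pos hpos
      have he : Real.log (p x / q x) - Real.log (∑ y, p y)
          = Real.log (p x / (q x * ∑ y, p y)) := by
        rw [Real.log_div (hp x).ne' h.ne',
          Real.log_div (hp x).ne' (by positivity : (q x * ∑ y, p y) ≠ 0),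
          Real.log_mul h.ne' hS.ne']
        ring
      rw [he]
      calc q x * Real.log (p x / (q x * ∑ y, p y))
          ≤ q x * (p x / (q x * ∑ y, p y) - 1) :=
            mul_le_mul_of_nonneg_left hlog (hq x)
        _ = p x / (∑ y, p y) - q x := by field_simp
  have h2 := Finset.sum_le_sum (fun x (_ : x ∈ Finset.univ) => key x)
  have h3 : ∑ x, (p x / (∑ y, p y) - q x) = 0 := by
    rw [Finset.sum_sub_distrib, hq1, ← Finset.sum_div, div_self hS.ne']
    ring
  have h4 : ∑ x, q x * (Real.log (p x / q x) - Real.log (∑ y, p y))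
      = (∑ x, q x * Real.log (p x / q x)) - Real.log (∑ y, p y) := by
    simp only [mul_sub]
    rw [Finset.sum_sub_distrib, ← Finset.sum_mul, hq1, one_mul]
  rw [h4, h3] at h2
  linarith

/-- Variational lower bound of the data log-likelihood with partial time steps
`s < t`: `log p(x_0) ≥ −D_KL(q_t(·|x_0) ∥ p_t) + E_{q_s(·|x_0)}[log p_0(x_0|x_s)]
− E_{q_t(·|x_0)} D_KL(q_s(·|x_t,x_0) ∥ p_s(·|x_t))`. -/
theorem partial_time_vlb
    {X : Type*} [Fintype X] (x0 : X)
    (qt : X → ℝ) (hqt_nonneg : ∀ x, 0 ≤ qt x) (hqt_sum : ∑ x, qt x = 1)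
    (qs : X → X → ℝ)  -- `qs xt xs = q_s(x_s | x_t, x_0)`
    (hqs_nonneg : ∀ xt xs, 0 ≤ qs xt xs) (hqs_sum : ∀ xt, ∑ xs, qs xt xs = 1)
    (pt : X → ℝ) (hpt_pos : ∀ x, 0 < pt x) (hpt_sum : ∑ x, pt x = 1)
    (ps : X → X → ℝ)  -- `ps xt xs = p_s(x_s | x_t)`
    (hps_pos : ∀ xt xs, 0 < ps xt xs) (hps_sum : ∀ xt, ∑ xs, ps xt xs = 1)
    (p0 : X → X → ℝ)  -- `p0 xs x = p_0(x | x_s)`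
    (hp0_pos : ∀ xs x, 0 < p0 xs x) (hp0_sum : ∀ xs, ∑ x, p0 xs x = 1) :
    Real.log (∑ xt, ∑ xs, pt xt * ps xt xs * p0 xs x0)
      ≥ -KLdiv qt pt
        + (∑ xs, (∑ xt, qt xt * qs xt xs) * Real.log (p0 xs x0))
        - ∑ xt, qt xt * KLdiv (qs xt) (ps xt) := by
  classical
  have hX : Nonempty X := ⟨x0⟩
  set Q : X × X → ℝ := fun z => qt z.1 * qs z.1 z.2 with hQ
  set P : X × X → ℝ := fun z => pt z.1 * ps z.1 z.2 * p0 z.2 x0 with hP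
  have hQnn : ∀ z, 0 ≤ Q z := fun z => mul_nonneg (hqt_nonneg _) (hqs_nonneg _ _)
  have hQ1 : ∑ z, Q z = 1 := by
    rw [Fintype.sum_prod_type]
    simp only [hQ, ← Finset.mul_sum, hqs_sum, mul_one]
    exact hqt_sum
  have hPpos : ∀ z, 0 < P z := fun z => by
    have h1 := hpt_pos z.1; have h2 := hps_pos z.1 z.2; have h3 := hp0_pos z.2 x0
    positivity
  have hgibbs := gibbs_aux Q P hQnn hQ1 hPpos
  have hPsum : ∑ z, P z = ∑ xt, ∑ xs, pt xt * ps xt xs * p0 xs x0 := by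
    rw [Fintype.sum_prod_type]
  rw [hPsum] at hgibbs
  -- termwise expansion of log ratio
  have hterm : ∀ xt xs, qt xt * qs xt xs *
      Real.log ((pt xt * ps xt xs * p0 xs x0) / (qt xt * qs xt xs))
      = qt xt * qs xt xs * Real.log (pt xt / qt xt)
        + qt xt * (qs xt xs * Real.log (ps xt xs / qs xt xs))
        + qt xt * qs xt xs * Real.log (p0 xs x0) := by
    intro xt xs
    have hpt := hpt_pos xt
    have hps := hps_pos xt xs
    have hp0 := hp0_pos xs x0
    rcases eq_or_lt_of_le (hqt_nonneg xt) with h1 | h1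
    · simp [← h1]
    rcases eq_or_lt_of_le (hqs_nonneg xt xs) with h2 | h2
    · simp [← h2]
    have e1 : (pt xt * ps xt xs * p0 xs x0) / (qt xt * qs xt xs)
        = (pt xt / qt xt) * (ps xt xs / qs xt xs) * p0 xs x0 := by
      field_simp
    rw [e1, Real.log_mul (by positivity) (hp0_pos xs x0).ne',
      Real.log_mul (by positivity) (by positivity)]
    ring
  have hsplit : ∑ z, Q z * Real.log (P z / Q z)
      = (∑ xt, qt xt * Real.log (pt xt / qt xt))
        + (∑ xt, qt xt * ∑ xs, qs xt xs * Real.log (ps xt xs / qs xt xs))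
        + (∑ xs, (∑ xt, qt xt * qs xt xs) * Real.log (p0 xs x0)) := by
    rw [Fintype.sum_prod_type]
    simp only [hQ, hP]
    calc ∑ xt, ∑ xs, qt xt * qs xt xs *
          Real.log ((pt xt * ps xt xs * p0 xs x0) / (qt xt * qs xt xs))
        = ∑ xt, ((∑ xs, qt xt * qs xt xs * Real.log (pt xt / qt xt))
            + (∑ xs, qt xt * (qs xt xs * Real.log (ps xt xs / qs xt xs)))
            + (∑ xs, qt xt * qs xt xs * Real.log (p0 xs x0))) := by
          apply Finset.sum_congr rfl
          intro xt _
          rw [← Finset.sum_add_distrib, ← Finset.sum_add_distrib]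
          exact Finset.sum_congr rfl (fun xs _ => hterm xt xs)
      _ = (∑ xt, ∑ xs, qt xt * qs xt xs * Real.log (pt xt / qt xt))
            + (∑ xt, ∑ xs, qt xt * (qs xt xs * Real.log (ps xt xs / qs xt xs)))
            + (∑ xt, ∑ xs, qt xt * qs xt xs * Real.log (p0 xs x0)) := by
          rw [← Finset.sum_add_distrib, ← Finset.sum_add_distrib]
      _ = (∑ xt, qt xt * Real.log (pt xt / qt xt))
            + (∑ xt, qt xt * ∑ xs, qs xt xs * Real.log (ps xt xs / qs xt xs))
            + (∑ xs, (∑ xt, qt xt * qs xt xs) * Real.log (p0 xs x0)) := by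
          congr 1
          · congr 1
            · apply Finset.sum_congr rfl
              intro xt _
              rw [show (∑ xs, qt xt * qs xt xs * Real.log (pt xt / qt xt))
                  = (qt xt * Real.log (pt xt / qt xt)) * ∑ xs, qs xt xs by
                rw [Finset.mul_sum]
                exact Finset.sum_congr rfl (fun xs _ => by ring)]
              rw [hqs_sum, mul_one]
            · exact Finset.sum_congr rfl (fun xt _ => (Finset.mul_sum _ _ _).symm)
          · rw [Finset.sum_comm]
            apply Finset.sum_congr rfl
            intro xs _
            rw [Finset.sum_mul]
  rw [hsplit] at hgibbs
  have e1 : -KLdiv qt pt = ∑ xt, qt xt * Real.log (pt xt / qt xt) := neg_KLdiv qt pt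
  have e2 : ∑ xt, qt xt * KLdiv (qs xt) (ps xt)
      = -∑ xt, qt xt * ∑ xs, qs xt xs * Real.log (ps xt xs / qs xt xs) := by
    rw [← Finset.sum_neg_distrib]
    apply Finset.sum_congr rfl
    intro xt _
    rw [← neg_KLdiv (qs xt) (ps xt)]
    ring
  rw [e1, e2]
  linarith
end

section
/- Let 𝒳 be a finite set, T ≥ 2, and fix x_0 ∈ 𝒳. Let q(x_t | x_{t−1}) for t = 1,…,T be Markov transition kernels on 𝒳 defining the forward joint q(x_{1:T} | x_0) = ∏_{t=1}^T q(x_t | x_{t−1}); denote by q(x_t | x_0) the induced marginals and by q(x_{t−1} | x_t, x_0) the induced Bayes posteriors (assume all relevant probabilities are strictly positive). Let p(x_T), p(x_{t−1} | x_t) for t = 1,…,T be strictly positive probability mass functions defining the reverse joint p(x_{0:T}) = p(x_T) ∏_{t=1}^T p(x_{t−1} | x_t). Then log Σ_{x_{1:T}} p(x_{0:T}) ≥ Σ_{x_1} q(x_1 | x_0) log p(x_0 | x_1) − D_KL(q(x_T | x_0) ∥ p(x_T)) − Σ_{t=2}^T Σ_{x_t} q(x_t | x_0) D_KL(q(x_{t−1}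 | x_t, x_0) ∥ p(x_{t−1} | x_t)). -/
/-- The value at time `t ∈ {0,…,T}` of the trajectory `x_{1:T} = τ` extended by
`x_0` at time `0`. -/
def trajVal {X : Type*} {T : ℕ} (x0 : X) (τ : Fin T → X) (t : ℕ) : X :=
  if h : t - 1 < T ∧ t ≠ 0 then τ ⟨t - 1, h.1⟩ else x0

/-- Forward joint probability `q(x_{1:T} | x_0) = ∏_{t=1}^T q(x_t | x_{t-1})`,
where `Kf t u v = q(x_t = v | x_{t-1} = u)`. -/
noncomputable def fwdJoint {X : Type*} {T : ℕ} (Kf : ℕ → X → X → ℝ) (x0 : X)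
    (τ : Fin T → X) : ℝ :=
  ∏ t ∈ Finset.Icc 1 T, Kf t (trajVal x0 τ (t - 1)) (trajVal x0 τ t)

/-- Induced forward marginal `q(x_t = x | x_0)`. -/
noncomputable def fwdMarg {X : Type*} [Fintype X] [DecidableEq X] (T : ℕ)
    (Kf : ℕ → X → X → ℝ) (x0 : X) (t : ℕ) (x : X) : ℝ :=
  ∑ τ : Fin T → X, if trajVal x0 τ t = x then fwdJoint Kf x0 τ else 0

/-- Induced Bayes posterior `q(x_{t-1} = u | x_t = xt, x_0)`. -/
noncomputable def fwdPost {X : Type*} [Fintype X] [DecidableEq X] (T : ℕ)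
    (Kf : ℕ → X → X → ℝ) (x0 : X) (t : ℕ) (xt u : X) : ℝ :=
  (∑ τ : Fin T → X,
      if trajVal x0 τ t = xt ∧ trajVal x0 τ (t - 1) = u then fwdJoint Kf x0 τ else 0)
    / fwdMarg T Kf x0 t xt

/-- Reverse joint probability `p(x_{0:T}) = p(x_T) ∏_{t=1}^T p(x_{t-1} | x_t)`,
where `pr t v u = p(x_{t-1} = u | x_t = v)`, evaluated on the trajectory with
`x_0 = x0` and `x_{1:T} = τ`. -/
noncomputable def revJoint {X : Type*} {T : ℕ} (pT : X → ℝ) (pr : ℕ → X → X → ℝ)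
    (x0 : X) (τ : Fin T → X) : ℝ :=
  pT (trajVal x0 τ T) * ∏ t ∈ Finset.Icc 1 T, pr t (trajVal x0 τ t) (trajVal x0 τ (t - 1))

/-!
By Jensen's inequality for the concave logarithm, `log ∑ p(x_{0:T})` is at least the ELBO
`E_q[log (p(x_{0:T}) / q(x_{1:T} | x_0))]`. The forward chain is Markov, so
`q(x_{t-1}, x_t | x_0) = q(x_{t-1} | x_0) q(x_t | x_{t-1})`, and Bayes' rule writes each forward
kernel as `q(x_{t-1} | x_t, x_0) q(x_t | x_0) / q(x_{t-1} | x_0)`. The marginals telescope, which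
gives the reverse factorization `q(x_{1:T} | x_0) = q(x_T | x_0) ∏_t q(x_{t-1} | x_t, x_0)`.
Hence `log (p / q)` splits into one term per factor, with expectations
`-D_KL(q(x_T | x_0) ∥ p(x_T))` and `-E D_KL(q(x_{t-1} | x_t, x_0) ∥ p(x_{t-1} | x_t))`;
at `t = 1` the posterior is the point mass at `x_0`, and its term is the reconstruction term.
-/

open Finset

theorem sum_mul_log_div_le_log_sum {ι : Type*} (s : Finset ι) {w p : ι → ℝ}
    (hw : ∀ i ∈ s, 0 < w i) (hw1 : ∑ i ∈ s, w i = 1) (hp : ∀ i ∈ s, 0 < p i) :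
    ∑ i ∈ s, w i * Real.log (p i / w i) ≤ Real.log (∑ i ∈ s, p i) := by
  have jensen := strictConcaveOn_log_Ioi.concaveOn.le_map_sum (p := fun i => p i / w i)
    (fun i hi => (hw i hi).le) hw1 (fun i hi => div_pos (hp i hi) (hw i hi))
  simp only [smul_eq_mul] at jensen
  rwa [sum_congr rfl fun i hi => mul_div_cancel₀ (p i) (hw i hi).ne'] at jensen

theorem sum_mul_comp_eq_sum_fiberwise {ι α : Type*} [Fintype ι] [Fintype α] [DecidableEq α]
    (w : ι → ℝ) (a : ι → α) (f : α → ℝ) :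
    ∑ i, w i * f (a i) = ∑ x, (∑ i, if a i = x then w i else 0) * f x := by
  simp only [sum_mul, ite_mul, zero_mul]
  rw [sum_comm]
  simp

theorem sum_mul_comp₂_eq_sum_fiberwise {ι α β : Type*} [Fintype ι] [Fintype α] [Fintype β]
    [DecidableEq α] [DecidableEq β] (w : ι → ℝ) (a : ι → α) (b : ι → β)
    (g : α → β → ℝ) :
    ∑ i, w i * g (a i) (b i)
      = ∑ x, ∑ y, (∑ i, if a i = x ∧ b i = y then w i else 0) * g x y := by
  rw [sum_mul_comp_eq_sum_fiberwise w (fun i => (a i, b i)) (fun p => g p.1 p.2),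
    Fintype.sum_prod_type]
  simp only [Prod.mk.injEq]

theorem prod_Icc_one_div_sub_one {G : Type*} [CommGroupWithZero G] {f : ℕ → G}
    (hf : ∀ t, f t ≠ 0) (n : ℕ) : ∏ t ∈ Icc 1 n, f t / f (t - 1) = f n / f 0 := by
  induction n with
  | zero => simp [div_self (hf 0)]
  | succ n ih =>
    rw [prod_Icc_succ_top (by omega), ih, Nat.add_sub_cancel, mul_comm,
      div_mul_div_cancel₀ (hf n)]

theorem KLdiv_ite_eq {X : Type*} [Fintype X] [DecidableEq X] (a : X) (p : X → ℝ) :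
    KLdiv (fun u => if u = a then 1 else 0) p = -Real.log (p a) := by
  rw [KLdiv, sum_eq_single a (fun u _ hu => by simp [hu]) (by simp)]
  simp [Real.log_inv]

theorem sum_pi_fin_succ {α M : Type*} [Fintype α] [AddCommMonoid M] {n : ℕ}
    (f : (Fin (n + 1) → α) → M) :
    ∑ τ, f τ = ∑ σ : Fin n → α, ∑ a, f (Fin.snoc σ a) := by
  rw [← (Fin.snocEquiv fun _ => α).sum_comp, Fintype.sum_prod_type, sum_comm]
  rfl

theorem KLdiv_eq_neg_sum_mul_log_div {X : Type*} [Fintype X] (q p : X → ℝ) :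
    KLdiv q p = -∑ x, q x * Real.log (p x / q x) := by
  rw [KLdiv, ← sum_neg_distrib]
  refine sum_congr rfl fun x _ => ?_
  rw [← mul_neg, ← Real.log_inv, inv_div]

section Trajectory

variable {X : Type*} {T : ℕ} (x0 : X)

@[simp]
theorem trajVal_zero (τ : Fin T → X) : trajVal x0 τ 0 = x0 := by
  simp [trajVal]

theorem trajVal_const {t : ℕ} (ht : 1 ≤ t) (htT : t ≤ T) (v : X) :
    trajVal x0 (fun _ : Fin T => v) t = v := by
  rw [trajVal, dif_pos ⟨by omega, by omega⟩]

theorem trajVal_snoc_of_le (σ : Fin T → X) (v : X) {s : ℕ} (hs : s ≤ T) :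
    trajVal x0 (Fin.snoc σ v : Fin (T + 1) → X) s = trajVal x0 σ s := by
  rcases s with _ | s
  · simp
  · rw [trajVal, trajVal, dif_pos ⟨by omega, by omega⟩, dif_pos ⟨by omega, by omega⟩]
    exact Fin.snoc_castSucc (α := fun _ => X) (i := ⟨s, by omega⟩) ..

theorem trajVal_snoc_succ (σ : Fin T → X) (v : X) :
    trajVal x0 (Fin.snoc σ v : Fin (T + 1) → X) (T + 1) = v := by
  rw [trajVal, dif_pos ⟨by omega, by omega⟩]
  exact Fin.snoc_last (α := fun _ => X) ..

theorem fwdJoint_snoc (Kf : ℕ → X → X → ℝ) (σ : Fin T → X) (v : X) :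
    fwdJoint Kf x0 (Fin.snoc σ v : Fin (T + 1) → X)
      = fwdJoint Kf x0 σ * Kf (T + 1) (trajVal x0 σ T) v := by
  rw [fwdJoint, prod_Icc_succ_top (by omega), Nat.add_sub_cancel, trajVal_snoc_succ,
    trajVal_snoc_of_le x0 σ v le_rfl, fwdJoint]
  congr 1
  refine prod_congr rfl fun t ht => ?_
  rw [mem_Icc] at ht
  rw [trajVal_snoc_of_le x0 σ v ht.2, trajVal_snoc_of_le x0 σ v (by omega)]

theorem fwdJoint_pos {Kf : ℕ → X → X → ℝ} (hKf_pos : ∀ t u v, 0 < Kf t u v)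
    (τ : Fin T → X) : 0 < fwdJoint Kf x0 τ :=
  prod_pos fun _ _ => hKf_pos _ _ _

theorem revJoint_pos {pT : X → ℝ} {pr : ℕ → X → X → ℝ} (hpT_pos : ∀ x, 0 < pT x)
    (hpr_pos : ∀ t v u, 0 < pr t v u) (τ : Fin T → X) : 0 < revJoint pT pr x0 τ :=
  mul_pos (hpT_pos _) (prod_pos fun _ _ => hpr_pos _ _ _)

end Trajectory

section PathSums

variable {X : Type*} [Fintype X] {T : ℕ} {Kf : ℕ → X → X → ℝ} {x0 : X}

theorem sum_ite_fwdJoint_pos (hKf_pos : ∀ t u v, 0 < Kf t u v) (P : (Fin T → X) → Prop)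
    [DecidablePred P] {τ : Fin T → X} (hτ : P τ) :
    0 < ∑ σ, if P σ then fwdJoint Kf x0 σ else 0 := by
  refine sum_pos' (fun σ _ => ?_)
    ⟨τ, mem_univ τ, by simpa [hτ] using fwdJoint_pos x0 hKf_pos τ⟩
  split_ifs
  exacts [(fwdJoint_pos x0 hKf_pos σ).le, le_rfl]

theorem sum_ite_fwdJoint_succ (hK : ∀ u, ∑ v, Kf (T + 1) u v = 1) (P : (ℕ → X) → Prop)
    [DecidablePred P]
    (hP : ∀ (σ : Fin T → X) v, P (trajVal x0 (Fin.snoc σ v : Fin (T + 1) → X)) ↔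
      P (trajVal x0 σ)) :
    ∑ τ : Fin (T + 1) → X, (if P (trajVal x0 τ) then fwdJoint Kf x0 τ else 0)
      = ∑ σ : Fin T → X, if P (trajVal x0 σ) then fwdJoint Kf x0 σ else 0 := by
  rw [sum_pi_fin_succ]
  refine sum_congr rfl fun σ _ => ?_
  simp only [hP, fwdJoint_snoc]
  split_ifs
  · rw [← mul_sum, hK, mul_one]
  · simp

theorem sum_fwdJoint_eq_one (hKf_sum : ∀ t u, ∑ v, Kf t u v = 1) :
    ∀ T, ∑ τ : Fin T → X, fwdJoint Kf x0 τ = 1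
  | 0 => by simp [fwdJoint]
  | T + 1 => by
    simpa [sum_fwdJoint_eq_one hKf_sum T] using
      sum_ite_fwdJoint_succ (x0 := x0) (hKf_sum (T + 1)) (fun _ => True) fun _ _ => Iff.rfl

end PathSums

/-- The pair marginal `q(x_t = xt, x_{t-1} = u | x_0)`, the numerator of `fwdPost`. -/
noncomputable def fwdPair {X : Type*} [Fintype X] [DecidableEq X] (T : ℕ)
    (Kf : ℕ → X → X → ℝ) (x0 : X) (t : ℕ) (xt u : X) : ℝ :=
  ∑ τ : Fin T → X,
    if trajVal x0 τ t = xt ∧ trajVal x0 τ (t - 1) = u then fwdJoint Kf x0 τ else 0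

section ForwardChain

variable {X : Type*} [Fintype X] [DecidableEq X] {T : ℕ} {Kf : ℕ → X → X → ℝ} {x0 : X}

theorem fwdMarg_trajVal_pos (hKf_pos : ∀ t u v, 0 < Kf t u v) (τ : Fin T → X) (t : ℕ) :
    0 < fwdMarg T Kf x0 t (trajVal x0 τ t) :=
  sum_ite_fwdJoint_pos hKf_pos (fun σ => trajVal x0 σ t = trajVal x0 τ t) rfl

theorem fwdMarg_pos (hKf_pos : ∀ t u v, 0 < Kf t u v) {t : ℕ} (ht : 1 ≤ t) (htT : t ≤ T)
    (v : X) : 0 < fwdMarg T Kf x0 t v := by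
  simpa only [trajVal_const x0 ht htT] using
    fwdMarg_trajVal_pos (x0 := x0) hKf_pos (fun _ : Fin T => v) t

theorem fwdPost_trajVal_pos (hKf_pos : ∀ t u v, 0 < Kf t u v) (τ : Fin T → X) (t : ℕ) :
    0 < fwdPost T Kf x0 t (trajVal x0 τ t) (trajVal x0 τ (t - 1)) :=
  div_pos (sum_ite_fwdJoint_pos hKf_pos _ ⟨rfl, rfl⟩) (fwdMarg_trajVal_pos hKf_pos τ t)

theorem fwdMarg_zero_self (hKf_sum : ∀ t u, ∑ v, Kf t u v = 1) :
    fwdMarg T Kf x0 0 x0 = 1 := by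
  simp [fwdMarg, sum_fwdJoint_eq_one hKf_sum]

theorem fwdMarg_succ (hK : ∀ u, ∑ v, Kf (T + 1) u v = 1) {t : ℕ} (ht : t ≤ T) (x : X) :
    fwdMarg (T + 1) Kf x0 t x = fwdMarg T Kf x0 t x :=
  sum_ite_fwdJoint_succ hK (fun path => path t = x) fun σ v => by
    rw [trajVal_snoc_of_le x0 σ v ht]

theorem fwdPair_succ (hK : ∀ u, ∑ v, Kf (T + 1) u v = 1) {t : ℕ} (ht : t ≤ T) (xt u : X) :
    fwdPair (T + 1) Kf x0 t xt u = fwdPair T Kf x0 t xt u :=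
  sum_ite_fwdJoint_succ hK (fun path => path t = xt ∧ path (t - 1) = u) fun σ v => by
    rw [trajVal_snoc_of_le x0 σ v ht, trajVal_snoc_of_le x0 σ v (by omega)]

theorem fwdPair_succ_eq_fwdMarg_mul (hKf_sum : ∀ t u, ∑ v, Kf t u v = 1) {s : ℕ}
    (hs : s + 1 ≤ T) (v u : X) :
    fwdPair T Kf x0 (s + 1) v u = fwdMarg T Kf x0 s u * Kf (s + 1) u v := by
  induction T, hs using Nat.le_induction with
  | base =>
    rw [fwdMarg_succ (hKf_sum _) le_rfl, fwdPair, fwdMarg, sum_pi_fin_succ, sum_mul]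
    refine sum_congr rfl fun σ _ => ?_
    simp only [Nat.add_sub_cancel, trajVal_snoc_succ, trajVal_snoc_of_le x0 σ _ le_rfl,
      fwdJoint_snoc]
    by_cases h : trajVal x0 σ s = u <;> simp [h]
  | succ T hT ih =>
    rw [fwdPair_succ (hKf_sum _) (by omega), fwdMarg_succ (hKf_sum _) (by omega), ih]

theorem fwdPair_eq_fwdMarg_mul_fwdPost {t : ℕ} {v : X} (hv : fwdMarg T Kf x0 t v ≠ 0)
    (u : X) :
    fwdPair T Kf x0 t v u = fwdMarg T Kf x0 t v * fwdPost T Kf x0 t v u :=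
  (mul_div_cancel₀ _ hv).symm

theorem Kf_eq_fwdMarg_div_mul_fwdPost (hKf_sum : ∀ t u, ∑ v, Kf t u v = 1) {t : ℕ}
    (ht : 1 ≤ t) (htT : t ≤ T) {u v : X} (hu : fwdMarg T Kf x0 (t - 1) u ≠ 0)
    (hv : fwdMarg T Kf x0 t v ≠ 0) :
    Kf t u v = fwdMarg T Kf x0 t v / fwdMarg T Kf x0 (t - 1) u * fwdPost T Kf x0 t v u := by
  obtain ⟨s, rfl⟩ : ∃ s, t = s + 1 := ⟨t - 1, by omega⟩
  have markov := fwdPair_succ_eq_fwdMarg_mul (x0 := x0) hKf_sum htT v u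
  rw [fwdPair_eq_fwdMarg_mul_fwdPost hv] at markov
  rw [Nat.add_sub_cancel] at hu ⊢
  rw [div_mul_eq_mul_div, markov, mul_div_cancel_left₀ _ hu]

theorem fwdJoint_eq_fwdMarg_mul_prod_fwdPost (hKf_pos : ∀ t u v, 0 < Kf t u v)
    (hKf_sum : ∀ t u, ∑ v, Kf t u v = 1) (τ : Fin T → X) :
    fwdJoint Kf x0 τ = fwdMarg T Kf x0 T (trajVal x0 τ T) *
      ∏ t ∈ Icc 1 T, fwdPost T Kf x0 t (trajVal x0 τ t) (trajVal x0 τ (t - 1)) := by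
  set m : ℕ → ℝ := fun t => fwdMarg T Kf x0 t (trajVal x0 τ t)
  have hm : ∀ t, m t ≠ 0 := fun t => (fwdMarg_trajVal_pos hKf_pos τ t).ne'
  calc fwdJoint Kf x0 τ
      = ∏ t ∈ Icc 1 T, m t / m (t - 1) *
          fwdPost T Kf x0 t (trajVal x0 τ t) (trajVal x0 τ (t - 1)) := by
        refine prod_congr rfl fun t ht => ?_
        rw [mem_Icc] at ht
        exact Kf_eq_fwdMarg_div_mul_fwdPost hKf_sum ht.1 ht.2 (hm (t - 1)) (hm t)
    _ = m T / m 0 *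
          ∏ t ∈ Icc 1 T, fwdPost T Kf x0 t (trajVal x0 τ t) (trajVal x0 τ (t - 1)) := by
        rw [prod_mul_distrib, prod_Icc_one_div_sub_one hm]
    _ = _ := by simp [m, fwdMarg_zero_self hKf_sum]

theorem fwdPost_one (hKf_pos : ∀ t u v, 0 < Kf t u v) (hT : 1 ≤ T) (v u : X) :
    fwdPost T Kf x0 1 v u = if u = x0 then 1 else 0 := by
  rw [fwdPost]
  split_ifs with h
  · subst h
    simp only [Nat.sub_self, trajVal_zero, and_true]
    exact div_self (fwdMarg_pos hKf_pos le_rfl hT v).ne'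
  · simp [Ne.symm h]

theorem sum_fwdJoint_mul_comp (f : X → ℝ) (t : ℕ) :
    ∑ τ : Fin T → X, fwdJoint Kf x0 τ * f (trajVal x0 τ t)
      = ∑ v, fwdMarg T Kf x0 t v * f v :=
  sum_mul_comp_eq_sum_fiberwise _ _ f

theorem sum_fwdJoint_mul_comp₂ (hKf_pos : ∀ t u v, 0 < Kf t u v) {t : ℕ} (ht : 1 ≤ t)
    (htT : t ≤ T) (g : X → X → ℝ) :
    ∑ τ : Fin T → X, fwdJoint Kf x0 τ * g (trajVal x0 τ t) (trajVal x0 τ (t - 1))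
      = ∑ v, fwdMarg T Kf x0 t v * ∑ u, fwdPost T Kf x0 t v u * g v u := by
  rw [sum_mul_comp₂_eq_sum_fiberwise]
  refine sum_congr rfl fun v _ => ?_
  rw [mul_sum]
  refine sum_congr rfl fun u _ => ?_
  rw [← mul_assoc, ← fwdPair_eq_fwdMarg_mul_fwdPost (fwdMarg_pos hKf_pos ht htT v).ne']
  rfl

end ForwardChain

section ReverseModel

variable {X : Type*} [Fintype X] [DecidableEq X] {T : ℕ} {Kf : ℕ → X → X → ℝ} {x0 : X}
  {pT : X → ℝ} {pr : ℕ → X → X → ℝ}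

theorem log_revJoint_div_fwdJoint (hKf_pos : ∀ t u v, 0 < Kf t u v)
    (hKf_sum : ∀ t u, ∑ v, Kf t u v = 1) (hpT_pos : ∀ x, 0 < pT x)
    (hpr_pos : ∀ t v u, 0 < pr t v u) (τ : Fin T → X) :
    Real.log (revJoint pT pr x0 τ / fwdJoint Kf x0 τ)
      = Real.log (pT (trajVal x0 τ T) / fwdMarg T Kf x0 T (trajVal x0 τ T))
        + ∑ t ∈ Icc 1 T, Real.log (pr t (trajVal x0 τ t) (trajVal x0 τ (t - 1))
            / fwdPost T Kf x0 t (trajVal x0 τ t) (trajVal x0 τ (t - 1))) := by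
  have hratio : ∀ t, 0 < pr t (trajVal x0 τ t) (trajVal x0 τ (t - 1))
      / fwdPost T Kf x0 t (trajVal x0 τ t) (trajVal x0 τ (t - 1)) :=
    fun t => div_pos (hpr_pos _ _ _) (fwdPost_trajVal_pos hKf_pos τ t)
  rw [fwdJoint_eq_fwdMarg_mul_prod_fwdPost hKf_pos hKf_sum, revJoint, mul_div_mul_comm,
    ← prod_div_distrib,
    Real.log_mul (div_pos (hpT_pos _) (fwdMarg_trajVal_pos hKf_pos τ T)).ne'
      (prod_pos fun t _ => hratio t).ne',
    Real.log_prod fun t _ => (hratio t).ne']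

theorem sum_fwdJoint_mul_log_revJoint_div_fwdJoint (hKf_pos : ∀ t u v, 0 < Kf t u v)
    (hKf_sum : ∀ t u, ∑ v, Kf t u v = 1) (hpT_pos : ∀ x, 0 < pT x)
    (hpr_pos : ∀ t v u, 0 < pr t v u) :
    ∑ τ : Fin T → X, fwdJoint Kf x0 τ * Real.log (revJoint pT pr x0 τ / fwdJoint Kf x0 τ)
      = -KLdiv (fwdMarg T Kf x0 T) pT
        - ∑ t ∈ Icc 1 T, ∑ xt, fwdMarg T Kf x0 t xt
            * KLdiv (fun u => fwdPost T Kf x0 t xt u) (fun u => pr t xt u) := by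
  simp only [log_revJoint_div_fwdJoint hKf_pos hKf_sum hpT_pos hpr_pos, mul_add, mul_sum,
    sum_add_distrib]
  rw [sum_comm (s := univ),
    sum_fwdJoint_mul_comp (fun x => Real.log (pT x / fwdMarg T Kf x0 T x))]
  have htime : ∀ t ∈ Icc 1 T, ∑ τ : Fin T → X, fwdJoint Kf x0 τ
        * Real.log (pr t (trajVal x0 τ t) (trajVal x0 τ (t - 1))
          / fwdPost T Kf x0 t (trajVal x0 τ t) (trajVal x0 τ (t - 1)))
      = ∑ v, fwdMarg T Kf x0 t v * ∑ u, fwdPost T Kf x0 t v u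
          * Real.log (pr t v u / fwdPost T Kf x0 t v u) := fun t ht =>
    sum_fwdJoint_mul_comp₂ hKf_pos (mem_Icc.mp ht).1 (mem_Icc.mp ht).2
      (fun v u => Real.log (pr t v u / fwdPost T Kf x0 t v u))
  simp only [sum_congr rfl htime, KLdiv_eq_neg_sum_mul_log_div, mul_neg, sum_neg_distrib,
    neg_neg, sub_neg_eq_add]

end ReverseModel

theorem discrete_time_vlb_general
    {X : Type*} [Fintype X] [DecidableEq X] (T : ℕ) (hT : 2 ≤ T) (x0 : X)
    (Kf : ℕ → X → X → ℝ)
    (hKf_pos : ∀ t u v, 0 < Kf t u v) (hKf_sum : ∀ t u, ∑ v, Kf t u v = 1)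
    (pT : X → ℝ) (hpT_pos : ∀ x, 0 < pT x)
    (pr : ℕ → X → X → ℝ)
    (hpr_pos : ∀ t v u, 0 < pr t v u) :
    Real.log (∑ τ : Fin T → X, revJoint pT pr x0 τ)
      ≥ (∑ x1, fwdMarg T Kf x0 1 x1 * Real.log (pr 1 x1 x0))
        - KLdiv (fwdMarg T Kf x0 T) pT
        - ∑ t ∈ Finset.Icc 2 T, ∑ xt,
            fwdMarg T Kf x0 t xt
              * KLdiv (fun u => fwdPost T Kf x0 t xt u) (fun u => pr t xt u) := by
  have hT1 : 1 ≤ T := by omega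
  have jensen := sum_mul_log_div_le_log_sum univ (fun τ _ => fwdJoint_pos x0 hKf_pos τ)
    (sum_fwdJoint_eq_one hKf_sum T) (fun τ _ => revJoint_pos (x0 := x0) hpT_pos hpr_pos τ)
  rw [sum_fwdJoint_mul_log_revJoint_div_fwdJoint hKf_pos hKf_sum hpT_pos hpr_pos,
    ← insert_Icc_add_one_left_eq_Icc hT1, sum_insert (by simp)] at jensen
  simp only [Nat.reduceAdd, fwdPost_one hKf_pos hT1, KLdiv_ite_eq, mul_neg, sum_neg_distrib]
    at jensen
  linarith

/-- The standard variational lower bound (VLB) decomposition of the data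
log-likelihood for a discrete-time diffusion model with forward kernels `q`
and reverse model `p`. -/
theorem discrete_time_vlb
    {X : Type*} [Fintype X] [DecidableEq X] (T : ℕ) (hT : 2 ≤ T) (x0 : X)
    (Kf : ℕ → X → X → ℝ)
    (hKf_pos : ∀ t u v, 0 < Kf t u v) (hKf_sum : ∀ t u, ∑ v, Kf t u v = 1)
    (pT : X → ℝ) (hpT_pos : ∀ x, 0 < pT x) (hpT_sum : ∑ x, pT x = 1)
    (pr : ℕ → X → X → ℝ)
    (hpr_pos : ∀ t v u, 0 < pr t v u) (hpr_sum : ∀ t v, ∑ u, pr t v u = 1) :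
    Real.log (∑ τ : Fin T → X, revJoint pT pr x0 τ)
      ≥ (∑ x1, fwdMarg T Kf x0 1 x1 * Real.log (pr 1 x1 x0))
        - KLdiv (fwdMarg T Kf x0 T) pT
        - ∑ t ∈ Finset.Icc 2 T, ∑ xt,
            fwdMarg T Kf x0 t xt
              * KLdiv (fun u => fwdPost T Kf x0 t xt u) (fun u => pr t xt u) :=
  discrete_time_vlb_general T hT x0 Kf hKf_pos hKf_sum pT hpT_pos pr hpr_pos
end

section
/- Let m ∈ ℝ^K be a probability vector (entries sum to 1) and let R_b := 1 mᵀ − I ∈ ℝ^{K×K}. Then for every real c, the matrix exponential satisfies exp(c R_b) = e^{−c} I + (1 − e^{−c}) 1 mᵀ. -/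
/-!
`P = 1 mᵀ` is idempotent because `mᵀ 1 = ∑ m = 1`, hence so is `I - P`. For an idempotent `Q`
every power `(c Q)ⁿ` with `n ≥ 1` equals `cⁿ Q`, so the exponential series collapses to
`exp (c Q) = I + (e^c - 1) Q`. Apply this to `c (P - I) = (-c) (I - P)`.
-/

open NormedSpace

section IdempotentExp

variable {𝔸 : Type*} [NormedRing 𝔸] [NormedAlgebra ℝ 𝔸] [CompleteSpace 𝔸] {P : 𝔸}

theorem IsIdempotentElem.exp_smul (hP : IsIdempotentElem P) (c : ℝ) :
    exp (c • P) = 1 + (Real.exp c - 1) • P := by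
  have hscalar : HasSum (fun n : ℕ => (c ^ n / n.factorial) • P) (Real.exp c • P) := by
    rw [Real.exp_eq_exp_ℝ]
    exact (expSeries_div_hasSum_exp c).smul_const P
  -- the `n = 0` term of the series is `1`, not `P`
  have hcorrection : HasSum (fun n : ℕ => if n = 0 then 1 - P else 0) (1 - P) :=
    hasSum_ite_eq 0 (1 - P)
  have hseries : HasSum (fun n : ℕ => (n.factorial⁻¹ : ℝ) • (c • P) ^ n)
      (Real.exp c • P + (1 - P)) := by
    convert hscalar.add hcorrection using 1
    funext n
    rcases n with _ | n
    · simp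
    · rw [smul_pow, hP.pow_succ_eq, smul_smul, if_neg n.succ_ne_zero, add_zero, div_eq_inv_mul]
  rw [(exp_series_hasSum_exp' (𝕂 := ℝ) (c • P)).unique hseries]
  module

theorem IsIdempotentElem.exp_smul_sub_one (hP : IsIdempotentElem P) (c : ℝ) :
    exp (c • (P - 1)) = Real.exp (-c) • 1 + (1 - Real.exp (-c)) • P := by
  rw [show c • (P - 1) = (-c) • (1 - P) by module, hP.one_sub.exp_smul]
  module

end IdempotentExp

theorem Matrix.isIdempotentElem_vecMulVec {n R : Type*} [Fintype n] [CommSemiring R]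
    {u v : n → R} (h : v ⬝ᵥ u = 1) : IsIdempotentElem (vecMulVec u v) := by
  rw [IsIdempotentElem, vecMulVec_mul_vecMulVec, h, one_smul]

theorem exp_base_rate_matrix_general
    {K : ℕ} (m : Fin K → ℝ)
    (hm_sum : ∑ k, m k = 1) (c : ℝ) :
    NormedSpace.exp
        (c • (Matrix.vecMulVec (1 : Fin K → ℝ) m - (1 : Matrix (Fin K) (Fin K) ℝ)))
      = Real.exp (-c) • (1 : Matrix (Fin K) (Fin K) ℝ)
          + (1 - Real.exp (-c)) • Matrix.vecMulVec (1 : Fin K → ℝ) m := by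
  -- `exp` does not depend on the norm; any Banach-algebra norm on matrices will do
  let : NormedRing (Matrix (Fin K) (Fin K) ℝ) := Matrix.linftyOpNormedRing
  let : NormedAlgebra ℝ (Matrix (Fin K) (Fin K) ℝ) := Matrix.linftyOpNormedAlgebra
  have hP : IsIdempotentElem (Matrix.vecMulVec (1 : Fin K → ℝ) m) :=
    Matrix.isIdempotentElem_vecMulVec (by rw [dotProduct_one, hm_sum])
  exact hP.exp_smul_sub_one c

/-- For a probability vector `m` and the base rate matrix `R_b = 1 mᵀ − I`, the
matrix exponential satisfies `exp(c R_b) = e^{−c} I + (1 − e^{−c}) 1 mᵀ` for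
every real `c`. -/
theorem exp_base_rate_matrix
    {K : ℕ} (hK : 1 ≤ K) (m : Fin K → ℝ)
    (hm_nonneg : ∀ k, 0 ≤ m k) (hm_sum : ∑ k, m k = 1) (c : ℝ) :
    NormedSpace.exp
        (c • (Matrix.vecMulVec (1 : Fin K → ℝ) m - (1 : Matrix (Fin K) (Fin K) ℝ)))
      = Real.exp (-c) • (1 : Matrix (Fin K) (Fin K) ℝ)
          + (1 - Real.exp (-c)) • Matrix.vecMulVec (1 : Fin K → ℝ) m :=
  exp_base_rate_matrix_general m hm_sum c
end

section
/- Let m ∈ ℝ^K be a probability vector with all entries strictly positive, and let ᾱ ∈ (0,1). For one-hot vectors z, u ∈ ℝ^K define q(z | u) := ᾱ ⟨z, u⟩ + (1−ᾱ) ⟨z, m⟩. Fix a one-hot x and a probability vector f ∈ ℝ^K, and define g(z | x) := Σ_{k=1}^K (q(z | e_k) / q(x | e_k)) f_k. Then the vector (g(e_1|x), …, g(e_K|x)) equals [ (1 − ᾱ ⟨f, x⟩ / (ᾱ + (1−ᾱ)⟨x, m⟩)) m + (ᾱ/(1−ᾱ)) f ] ⊙ (1 − x)/⟨x, m⟩ +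 x, where the division by ⟨x, m⟩ is entrywise scaling. -/
/-- Forward conditional marginal `q_{t|0}(z | u) = ᾱ ⟨z, u⟩ + (1−ᾱ) ⟨z, m⟩` of
discrete diffusion, for one-hot `z, u`. -/
noncomputable def qcond {K : ℕ} (m : Fin K → ℝ) (a : ℝ) (z u : Fin K → ℝ) : ℝ :=
  a * (∑ i, z i * u i) + (1 - a) * (∑ i, z i * m i)

/-- Vector form of the estimator `g(z | x) = Σ_k (q(z|e_k)/q(x|e_k)) f_k` of the
marginal probability ratio: its `j`-th entry equals
`((1 − ᾱ⟨f,x⟩/(ᾱ+(1−ᾱ)⟨x,m⟩)) m_j + (ᾱ/(1−ᾱ)) f_j)(1 − x_j)/⟨x,m⟩ + x_j`. -/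
theorem ratio_estimator_vector_form
    {K : ℕ} (hK : 1 ≤ K) (m : Fin K → ℝ)
    (hm_pos : ∀ k, 0 < m k) (hm_sum : ∑ k, m k = 1)
    (a : ℝ) (ha : 0 < a ∧ a < 1)
    (x : Fin K → ℝ) (hx : ∃ i, x = Pi.single i 1)
    (f : Fin K → ℝ) (hf_nonneg : ∀ k, 0 ≤ f k) (hf_sum : ∑ k, f k = 1) :
    ∀ j, (∑ k, qcond m a (Pi.single j 1) (Pi.single k 1)
            / qcond m a x (Pi.single k 1) * f k)
      = ((1 - a * (∑ i, f i * x i) / (a + (1 - a) * ∑ i, x i * m i)) * m j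
          + a / (1 - a) * f j) * (1 - x j) / (∑ i, x i * m i) + x j := by
  obtain ⟨ha0, ha1⟩ := ha
  obtain ⟨i, rfl⟩ := hx
  have h1a : (0:ℝ) < 1 - a := by linarith
  intro j
  have hsingle : ∀ (p q : Fin K), (∑ t, (Pi.single p 1 : Fin K → ℝ) t * (Pi.single q 1 : Fin K → ℝ) t) = if p = q then 1 else 0 := by
    intro p q
    classical
    simp only [Pi.single_apply, ite_mul, one_mul, zero_mul,
      Finset.sum_ite_eq', Finset.mem_univ, if_true]
  have hsm : ∀ (p : Fin K), (∑ t, (Pi.single p 1 : Fin K → ℝ) t * m t) = m p := by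
    intro p; simp [Pi.single_apply]
  have hfm : (∑ t, f t * (Pi.single i 1 : Fin K → ℝ) t) = f i := by
    simp [Pi.single_apply]
  have hxm : (∑ t, (Pi.single i 1 : Fin K → ℝ) t * m t) = m i := hsm i
  simp only [qcond, hsingle, hsm, hfm, hxm]
  simp only [Pi.single_apply]
  have hmi := hm_pos i
  have hden1 : a + (1 - a) * m i ≠ 0 := by positivity
  have hden2 : (1 - a) * m i ≠ 0 := by positivity
  rcases eq_or_ne j i with rfl | hji
  · have : ∀ k, (a * (if j = k then 1 else 0) + (1 - a) * m j)
        / (a * (if j = k then 1 else 0) + (1 - a) * m j) * f k = f k := by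
      intro k
      rcases eq_or_ne j k with rfl | h
      · rw [if_pos rfl, div_self (by positivity : a * 1 + (1-a) * m j ≠ 0), one_mul]
      · rw [if_neg h, div_self (by simpa using hden2), one_mul]
    rw [Finset.sum_congr rfl fun k _ => this k, hf_sum]
    simp
  · have key : ∀ k, (a * (if j = k then 1 else 0) + (1 - a) * m j)
        / (a * (if i = k then 1 else 0) + (1 - a) * m i) * f k
        = m j / m i * f k
          + (if k = i then ((1 - a) * m j / (a + (1 - a) * m i) - m j / m i) * f i else 0)
          + (if k = j then ((a + (1 - a) * m j) / ((1 - a) * m i) - m j / m i) * f j else 0) := by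
      intro k
      rcases eq_or_ne k i with rfl | hki
      · rw [if_neg hji, if_pos rfl, if_pos rfl, if_neg (Ne.symm hji)]
        field_simp
        ring
      · rcases eq_or_ne k j with rfl | hkj
        · rw [if_pos rfl, if_neg (Ne.symm hji), if_neg hji, if_pos rfl]
          field_simp
          ring
        · rw [if_neg (Ne.symm hkj), if_neg (Ne.symm hki), if_neg hki, if_neg hkj]
          field_simp
          ring
    rw [Finset.sum_congr rfl fun k _ => key k]
    rw [Finset.sum_add_distrib, Finset.sum_add_distrib, ← Finset.mul_sum, hf_sum,
      Finset.sum_ite_eq' Finset.univ i _, Finset.sum_ite_eq' Finset.univ j _]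
    simp only [Finset.mem_univ, if_true, if_neg hji, mul_one]
    field_simp
    ring
end

section
/- Let D ≥ 1 and for each d = 1,…,D let 𝒳^d be a finite set; write 𝒳 := ∏_d 𝒳^d, and for x ∈ 𝒳 write x^{∖d} for x with coordinate d removed. Let p_data be a probability mass function on 𝒳 and, for each d and u ∈ 𝒳^d, let q^d(· | u) be a strictly positive probability mass function on 𝒳^d; define q_{t|0}(x | x_0) := ∏_d q^d(x^d | x_0^d), q_t(x) := Σ_{x_0} q_{t|0}(x | x_0) p_data(x_0), and q_{0|t}(x_0 | x) := q_{t|0}(x | x_0) p_data(x_0)/q_t(x) (assume q_t(x) > 0). Let the forward rate on 𝒳 be r(y | x) := Σ_d r^d(y^d | x^d) δ_{x^{∖d}, y^{∖d}} for given functions r^d. Then for all x ≠ y with q_t(x) > 0, the reverse rate r̂(y | x) := r(x | y) q_t(y)/q_t(x) satisfies r̂(y | x) = Σ_d r^d(x^d | y^d) δ_{x^{∖d}, y^{∖d}} Σ_{u ∈ 𝒳^d} (q^d(y^d | u)/q^d(x^d | u)) q_{0|t}^d(u | x), where q_{0|t}^d(u | x) := Σ_{x_0 : x_0^d = u} q_{0|t}(x_0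 | x) is the d-th marginal of the posterior. -/
/-- Coordinatewise factorization of the reverse transition rate of a
multi-element continuous-time Markov chain: for `x ≠ y` with `q_t(x) > 0`,
`r̂(y|x) := r(x|y) q_t(y)/q_t(x)` equals
`Σ_d r^d(x^d|y^d) δ_{x^{∖d},y^{∖d}} Σ_u (q^d(y^d|u)/q^d(x^d|u)) q_{0|t}^d(u|x)`,
where `q_{0|t}^d(·|x)` is the `d`-th marginal of the Bayes posterior. -/
theorem reverse_rate_factorization
    {D : ℕ} (hD : 1 ≤ D) {X : Fin D → Type*}
    [∀ d, Fintype (X d)] [∀ d, DecidableEq (X d)]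
    (pdata : (∀ d, X d) → ℝ)
    (hpd_nonneg : ∀ x, 0 ≤ pdata x) (hpd_sum : ∑ x, pdata x = 1)
    (qd : ∀ d, X d → X d → ℝ)  -- `qd d v u = q^d(v | u)`
    (hqd_pos : ∀ d v u, 0 < qd d v u) (hqd_sum : ∀ d u, ∑ v, qd d v u = 1)
    (rd : ∀ d, X d → X d → ℝ)  -- `rd d a b = r^d(a | b)`
    (x y : ∀ d, X d) (hxy : x ≠ y)
    (hqt_pos : 0 < ∑ x0, (∏ d, qd d (x d) (x0 d)) * pdata x0) :
    (∑ d, rd d (x d) (y d)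
        * (if ∀ e, e ≠ d → y e = x e then (1 : ℝ) else 0))
      * (∑ x0, (∏ d, qd d (y d) (x0 d)) * pdata x0)
      / (∑ x0, (∏ d, qd d (x d) (x0 d)) * pdata x0)
    = ∑ d, rd d (x d) (y d)
        * (if ∀ e, e ≠ d → x e = y e then (1 : ℝ) else 0)
        * ∑ u, (qd d (y d) u / qd d (x d) u)
            * ∑ x0, (if x0 d = u then
                (∏ e, qd e (x e) (x0 e)) * pdata x0
                  / (∑ x0', (∏ e, qd e (x e) (x0' e)) * pdata x0')
              else 0) := by

  rw [Finset.sum_mul, Finset.sum_div]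
  refine Finset.sum_congr rfl fun d _ => ?_
  by_cases h : ∀ e, e ≠ d → y e = x e
  · have h' : ∀ e, e ≠ d → x e = y e := fun e he => (h e he).symm
    rw [if_pos h, if_pos h']
    have key : (∑ u, (qd d (y d) u / qd d (x d) u)
            * ∑ x0, (if x0 d = u then (∏ e, qd e (x e) (x0 e)) * pdata x0
                  / (∑ x0', (∏ e, qd e (x e) (x0' e)) * pdata x0') else 0))
        = (∑ x0, (∏ e, qd e (y e) (x0 e)) * pdata x0)
          / (∑ x0, (∏ e, qd e (x e) (x0 e)) * pdata x0) := by
      simp only [Finset.mul_sum, mul_ite, mul_zero]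
      rw [Finset.sum_comm]
      rw [Finset.sum_div]
      refine Finset.sum_congr rfl fun x0 _ => ?_
      rw [Finset.sum_ite_eq Finset.univ (x0 d)
        (fun u => qd d (y d) u / qd d (x d) u
          * ((∏ e, qd e (x e) (x0 e)) * pdata x0
              / (∑ x0', (∏ e, qd e (x e) (x0' e)) * pdata x0'))),
        if_pos (Finset.mem_univ _)]
      have hx : (∏ e, qd e (x e) (x0 e))
          = qd d (x d) (x0 d) * ∏ e ∈ Finset.univ.erase d, qd e (x e) (x0 e) :=
        (Finset.mul_prod_erase Finset.univ _ (Finset.mem_univ d)).symm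
      have hy : (∏ e, qd e (y e) (x0 e))
          = qd d (y d) (x0 d) * ∏ e ∈ Finset.univ.erase d, qd e (y e) (x0 e) :=
        (Finset.mul_prod_erase Finset.univ _ (Finset.mem_univ d)).symm
      have hprod : (∏ e ∈ Finset.univ.erase d, qd e (x e) (x0 e))
          = ∏ e ∈ Finset.univ.erase d, qd e (y e) (x0 e) :=
        Finset.prod_congr rfl fun e he => by
          rw [h e (Finset.ne_of_mem_erase he)]
      have hne : qd d (x d) (x0 d) ≠ 0 := (hqd_pos d _ _).ne'
      rw [hx, hy, hprod]
      field_simp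
    rw [key]; ring
  · rw [if_neg h, if_neg (fun h'' => h fun e he => (h'' e he).symm)]
    ring
end

section
/- In the multi-element setting with factorized forward marginals (q_{t|0}(x | x_0) = ∏_d q^d(x^d | x_0^d), q_t(x) = Σ_{x_0} q_{t|0}(x | x_0) p_data(x_0) > 0, posterior q_{0|t}(x_0 | x) = q_{t|0}(x | x_0) p_data(x_0)/q_t(x)) and forward rate r(y | x) = Σ_d r^d(y^d | x^d) δ_{x^{∖d}, y^{∖d}}, the reverse rate r̂(y | x) := r(x | y) q_t(y)/q_t(x) also admits, for all x ≠ y, the reciprocal formulation r̂(y | x) = Σ_d [ r^d(x^d | y^d) δ_{x^{∖d}, y^{∖d}} / ( Σ_{u ∈ 𝒳^d} (q^d(x^d | u)/q^d(y^d | u)) q_{0|t}^d(u | y) ) ], where q_{0|t}^d(u | y) := Σ_{x_0 : x_0^d = u} q_{0|t}(x_0 | y) is the d-th marginal of the posterior at y. -/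
/-- Reciprocal formulation of the reverse transition rate of a multi-element
continuous-time Markov chain: for `x ≠ y` (with `q_t(x), q_t(y) > 0`),
`r̂(y|x) := r(x|y) q_t(y)/q_t(x)` equals
`Σ_d r^d(x^d|y^d) δ_{x^{∖d},y^{∖d}} / (Σ_u (q^d(x^d|u)/q^d(y^d|u)) q_{0|t}^d(u|y))`,
where `q_{0|t}^d(·|y)` is the `d`-th marginal of the Bayes posterior at `y`. -/
theorem reverse_rate_reciprocal_factorization
    {D : ℕ} (hD : 1 ≤ D) {X : Fin D → Type*}
    [∀ d, Fintype (X d)] [∀ d, DecidableEq (X d)]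
    (pdata : (∀ d, X d) → ℝ)
    (hpd_nonneg : ∀ x, 0 ≤ pdata x) (hpd_sum : ∑ x, pdata x = 1)
    (qd : ∀ d, X d → X d → ℝ)  -- `qd d v u = q^d(v | u)`
    (hqd_pos : ∀ d v u, 0 < qd d v u) (hqd_sum : ∀ d u, ∑ v, qd d v u = 1)
    (rd : ∀ d, X d → X d → ℝ)  -- `rd d a b = r^d(a | b)`
    (x y : ∀ d, X d) (hxy : x ≠ y)
    (hqtx_pos : 0 < ∑ x0, (∏ d, qd d (x d) (x0 d)) * pdata x0)
    (hqty_pos : 0 < ∑ x0, (∏ d, qd d (y d) (x0 d)) * pdata x0) :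
    (∑ d, rd d (x d) (y d)
        * (if ∀ e, e ≠ d → y e = x e then (1 : ℝ) else 0))
      * (∑ x0, (∏ d, qd d (y d) (x0 d)) * pdata x0)
      / (∑ x0, (∏ d, qd d (x d) (x0 d)) * pdata x0)
    = ∑ d, rd d (x d) (y d)
        * (if ∀ e, e ≠ d → x e = y e then (1 : ℝ) else 0)
        / ∑ u, (qd d (x d) u / qd d (y d) u)
            * ∑ x0, (if x0 d = u then
                (∏ e, qd e (y e) (x0 e)) * pdata x0
                  / (∑ x0', (∏ e, qd e (y e) (x0' e)) * pdata x0')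
              else 0) := by
  classical
  set qtx := ∑ x0, (∏ d, qd d (x d) (x0 d)) * pdata x0 with hqtx
  set qty := ∑ x0, (∏ d, qd d (y d) (x0 d)) * pdata x0 with hqty
  by_cases h : ∃ d0, ∀ e, e ≠ d0 → x e = y e
  · obtain ⟨d0, hd0⟩ := h
    have hxd0 : x d0 ≠ y d0 := by
      intro heq
      apply hxy
      funext e
      by_cases he : e = d0
      · subst he; exact heq
      · exact hd0 e he
    have huniq : ∀ d, d ≠ d0 → ¬ (∀ e, e ≠ d → x e = y e) := by
      intro d hd hP
      exact hxd0 (hP d0 (Ne.symm hd))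
    have hL : (∑ d, rd d (x d) (y d) * (if ∀ e, e ≠ d → y e = x e then (1:ℝ) else 0))
        = rd d0 (x d0) (y d0) := by
      rw [Finset.sum_eq_single d0]
      · rw [if_pos (fun e he => (hd0 e he).symm), mul_one]
      · intro d _ hd
        rw [if_neg, mul_zero]
        intro hP
        exact huniq d hd (fun e he => (hP e he).symm)
      · simp
    have hS : (∑ u, (qd d0 (x d0) u / qd d0 (y d0) u)
          * ∑ x0, (if x0 d0 = u then (∏ e, qd e (y e) (x0 e)) * pdata x0 / qty else 0))
        = qtx / qty := by
      have step1 : ∀ u, (qd d0 (x d0) u / qd d0 (y d0) u)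
            * ∑ x0, (if x0 d0 = u then (∏ e, qd e (y e) (x0 e)) * pdata x0 / qty else 0)
          = ∑ x0, (if x0 d0 = u then
              (qd d0 (x d0) u / qd d0 (y d0) u) * ((∏ e, qd e (y e) (x0 e)) * pdata x0 / qty)
            else 0) := by
        intro u
        rw [Finset.mul_sum]
        refine Finset.sum_congr rfl ?_
        intro x0 _
        split <;> simp
      simp_rw [step1]
      rw [Finset.sum_comm]
      have step2 : ∀ x0 : (∀ d, X d),
          (∑ u, if x0 d0 = u then
              (qd d0 (x d0) u / qd d0 (y d0) u) * ((∏ e, qd e (y e) (x0 e)) * pdata x0 / qty)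
            else 0)
          = (∏ e, qd e (x e) (x0 e)) * pdata x0 / qty := by
        intro x0
        rw [Finset.sum_ite_eq Finset.univ (x0 d0)
          (fun u => (qd d0 (x d0) u / qd d0 (y d0) u) * ((∏ e, qd e (y e) (x0 e)) * pdata x0 / qty)),
          if_pos (Finset.mem_univ _)]
        have hprod : (qd d0 (x d0) (x0 d0) / qd d0 (y d0) (x0 d0)) * ∏ e, qd e (y e) (x0 e)
            = ∏ e, qd e (x e) (x0 e) := by
          have hx' : ∏ e, qd e (x e) (x0 e)
              = qd d0 (x d0) (x0 d0) * ∏ e ∈ Finset.univ.erase d0, qd e (x e) (x0 e) :=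
            (Finset.mul_prod_erase _ _ (Finset.mem_univ d0)).symm
          have hy' : ∏ e, qd e (y e) (x0 e)
              = qd d0 (y d0) (x0 d0) * ∏ e ∈ Finset.univ.erase d0, qd e (y e) (x0 e) :=
            (Finset.mul_prod_erase _ _ (Finset.mem_univ d0)).symm
          have heq : (∏ e ∈ Finset.univ.erase d0, qd e (y e) (x0 e))
              = ∏ e ∈ Finset.univ.erase d0, qd e (x e) (x0 e) := by
            refine Finset.prod_congr rfl ?_
            intro e he
            rw [hd0 e (Finset.ne_of_mem_erase he)]
          rw [hy', heq, hx', ← mul_assoc,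
            div_mul_cancel₀ _ (ne_of_gt (hqd_pos d0 (y d0) (x0 d0)))]
        rw [← hprod]; ring
      simp_rw [step2]
      rw [← Finset.sum_div]
    have hR : (∑ d, rd d (x d) (y d)
          * (if ∀ e, e ≠ d → x e = y e then (1 : ℝ) else 0)
          / ∑ u, (qd d (x d) u / qd d (y d) u)
              * ∑ x0, (if x0 d = u then (∏ e, qd e (y e) (x0 e)) * pdata x0 / qty else 0))
        = rd d0 (x d0) (y d0) / (qtx / qty) := by
      rw [Finset.sum_eq_single d0]
      · rw [if_pos hd0, mul_one, hS]
      · intro d _ hd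
        rw [if_neg (huniq d hd), mul_zero, zero_div]
      · simp
    rw [hL, hR, div_div_eq_mul_div]
  · push_neg at h
    have hL0 : (∑ d, rd d (x d) (y d) * (if ∀ e, e ≠ d → y e = x e then (1:ℝ) else 0)) = 0 := by
      refine Finset.sum_eq_zero ?_
      intro d _
      rw [if_neg, mul_zero]
      intro hP
      obtain ⟨e, he, hne⟩ := h d
      exact hne (hP e he).symm
    rw [hL0, zero_mul, zero_div]
    symm
    refine Finset.sum_eq_zero ?_
    intro d _
    rw [if_neg, mul_zero, zero_div]
    intro hP
    obtain ⟨e, he, hne⟩ := h d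
    exact hne (hP e he)
end

section
/- Let D ≥ 1, each 𝒳^d finite, 𝒳 = ∏_d 𝒳^d. Fix x_0 ∈ 𝒳 and strictly positive probability mass functions q^d(· | x_0^d) on 𝒳^d; let q(x | x_0) := ∏_d q^d(x^d | x_0^d). Let S^d : 𝒳^d × 𝒳^d → ℝ_{>0} be arbitrary positive functions and define the unnormalized kernel S(z | x) := (1 − δ_{z,x}) Σ_d S^d(z^d | x^d) δ_{z^{∖d}, x^{∖d}} with normalizer 𝒮(x) := Σ_z S(z | x) (assume 𝒮(x) > 0 for all x). Let q̃(z | x_0) := Σ_x q(x | x_0) S(z | x)/𝒮(x) be the law of z obtained by first sampling x ∼ q(· | x_0) and then z ∼ S(· | x)/𝒮(x). Then for every z ∈ 𝒳, q̃(z | x_0) = q(z | x_0) · M(z | x_0), where M(z | x_0) := Σ_{d=1}^D Σ_{w ∈ 𝒳^d, w ≠ z^d} (q^d(w | x_0^d)/q^d(z^d | x_0^d)) · S^d(z^d | w)/𝒮(w ∘ z^{∖d}), and w ∘ z^{∖d} denotes z with coordinate d replaced by w. -/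
/-- Unnormalized single-coordinate-change proposal kernel
`S(z|x) = (1 − δ_{z,x}) Σ_d S^d(z^d|x^d) δ_{z^{∖d},x^{∖d}}`. -/
def Sker {D : ℕ} {X : Fin D → Type*} [∀ d, Fintype (X d)] [∀ d, DecidableEq (X d)]
    (Sd : ∀ d, X d → X d → ℝ) (z x : ∀ d, X d) : ℝ :=
  (if z = x then 0 else 1)
    * ∑ d, Sd d (z d) (x d) * (if ∀ e, e ≠ d → z e = x e then (1 : ℝ) else 0)

/-! The kernel `S(z | x)` vanishes unless `x` differs from `z` in exactly one coordinate, i.e.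
`x = w ∘ z^{∖d}` with `w ≠ z^d`, and then it equals `S^d(z^d | w)` while
`q(x | x_0) = q(z | x_0) · q^d(w | x_0^d) / q^d(z^d | x_0^d)`. So the sum over `x` defining
`q̃(z | x_0)` collapses to a sum over the pairs `(d, w)`, term by term that of
`q(z | x_0) · M(z | x_0)`. -/

open Finset Function

section Hamming

variable {ι : Type*} [Fintype ι] {β : ι → Type*} [∀ i, DecidableEq (β i)]

theorem hammingDist_le_one_of_forall_ne_eq {x y : ∀ i, β i} {i : ι}
    (h : ∀ j, j ≠ i → x j = y j) : hammingDist x y ≤ 1 := by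
  calc hammingDist x y ≤ #{i} := card_le_card fun j hj => by
        by_contra hji
        exact (mem_filter.1 hj).2 (h j (by simpa using hji))
    _ = 1 := card_singleton i

variable [DecidableEq ι]

theorem exists_eq_update_of_hammingDist_eq_one {x y : ∀ i, β i} (h : hammingDist x y = 1) :
    ∃ i v, v ≠ x i ∧ y = update x i v := by
  obtain ⟨i, hi⟩ := card_eq_one.1 h
  have hne : ∀ j, x j ≠ y j ↔ j = i := fun j => by
    simpa using congrArg (j ∈ ·) hi
  refine ⟨i, y i, fun h => ((hne i).2 rfl) h.symm, funext fun j => ?_⟩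
  by_cases hji : j = i
  · subst hji; simp
  · rw [update_of_ne hji]
    exact (not_not.1 (mt (hne j).1 hji)).symm

variable [∀ i, Fintype (β i)]

theorem update_sigma_injOn (x : ∀ i, β i) :
    Set.InjOn (fun p : Σ i, β i => update x p.1 p.2)
      (univ.sigma fun i => univ.erase (x i) : Finset _) := by
  rintro ⟨i, v⟩ hv ⟨j, w⟩ hw heq
  simp only [coe_sigma, Set.mem_sigma_iff, coe_univ, Set.mem_univ, coe_erase,
    Set.mem_sdiff, Set.mem_singleton_iff, true_and] at hv hw
  have hi := congrFun heq i
  by_cases hij : i = j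
  · subst hij
    simp_all
  · simp only [update_self, update_of_ne hij] at hi
    exact absurd hi hv

theorem sum_eq_sum_update_of_hammingDist_ne_one {M : Type*} [AddCommMonoid M] (x : ∀ i, β i)
    (f : (∀ i, β i) → M) (hf : ∀ y, hammingDist x y ≠ 1 → f y = 0) :
    ∑ y, f y = ∑ i, ∑ v ∈ univ.erase (x i), f (update x i v) := by
  rw [← sum_sigma _ _ fun p => f (update x p.1 p.2), ← sum_image (update_sigma_injOn x)]
  refine (sum_subset (subset_univ _) fun y _ hy => hf y fun h => hy ?_).symm
  obtain ⟨i, v, hv, rfl⟩ := exists_eq_update_of_hammingDist_eq_one h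
  exact mem_image.2 ⟨⟨i, v⟩, by simpa using hv, rfl⟩

end Hamming

theorem mul_prod_apply_update {ι : Type*} [Fintype ι] [DecidableEq ι] {β : ι → Type*}
    {M : Type*} [CommMonoid M] (f : ∀ i, β i → M) (x : ∀ i, β i) (i : ι) (v : β i) :
    f i (x i) * ∏ j, f j (update x i v j) = f i v * ∏ j, f j (x j) := by
  rw [prod_congr rfl fun j _ => apply_update f x i v j, prod_update_of_mem (mem_univ i),
    prod_eq_mul_prod_sdiff_singleton_of_mem (mem_univ i) fun j => f j (x j), mul_left_comm]

section Kernel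

variable {D : ℕ} {X : Fin D → Type*} [∀ d, Fintype (X d)] [∀ d, DecidableEq (X d)]
  (Sd : ∀ d, X d → X d → ℝ)

theorem Sker_eq_zero_of_hammingDist_ne_one {z x : ∀ d, X d} (h : hammingDist z x ≠ 1) :
    Sker Sd z x = 0 := by
  unfold Sker
  split_ifs with hzx
  · exact zero_mul _
  · refine (one_mul _).trans (sum_eq_zero fun d _ => ?_)
    rw [if_neg fun hd => h ((hammingDist_le_one_of_forall_ne_eq hd).antisymm
      (hammingDist_pos.2 hzx)), mul_zero]

theorem Sker_update_of_ne {z : ∀ d, X d} {d : Fin D} {w : X d} (hw : w ≠ z d) :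
    Sker Sd z (update z d w) = Sd d (z d) w := by
  have hz : z ≠ update z d w := fun h => hw (by simpa using (congrFun h d).symm)
  unfold Sker
  rw [if_neg hz, one_mul, sum_eq_single d]
  · simp +contextual [update_of_ne]
  · intro e _ hed
    rw [if_neg fun h => hw ?_, mul_zero]
    simpa using (h d (Ne.symm hed)).symm
  · exact fun h => absurd (mem_univ d) h

end Kernel

theorem auxiliary_law_eq_marginal_times_normalizer_general
    {D : ℕ} {X : Fin D → Type*}
    [∀ d, Fintype (X d)] [∀ d, DecidableEq (X d)]
    (qd : ∀ d, X d → ℝ)  -- `qd d v = q^d(v | x_0^d)`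
    (hqd_pos : ∀ d v, 0 < qd d v)
    (Sd : ∀ d, X d → X d → ℝ) :  -- `Sd d b a = S^d(b | a)`
    ∀ z : ∀ d, X d,
      (∑ x, (∏ d, qd d (x d)) * (Sker Sd z x / ∑ z', Sker Sd z' x))
        = (∏ d, qd d (z d))
            * ∑ d, ∑ w ∈ Finset.univ.erase (z d),
                (qd d w / qd d (z d)) * Sd d (z d) w
                  / ∑ z', Sker Sd z' (Function.update z d w) := by
  intro z
  rw [sum_eq_sum_update_of_hammingDist_ne_one z _ fun x hx => by
    rw [Sker_eq_zero_of_hammingDist_ne_one Sd hx, zero_div, mul_zero]]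
  simp only [mul_sum]
  refine sum_congr rfl fun d _ => sum_congr rfl fun w hw => ?_
  have hprod : ∏ e, qd e (update z d w e) = qd d w * (∏ e, qd e (z e)) / qd d (z d) :=
    eq_div_of_mul_eq (hqd_pos d (z d)).ne'
      ((mul_comm _ _).trans (mul_prod_apply_update qd z d w))
  rw [Sker_update_of_ne Sd (ne_of_mem_erase hw), hprod]
  ring

/-- The law `q̃(z|x_0)` of `z` obtained by sampling `x ∼ q(·|x_0)` and then
`z ∼ S(·|x)/𝒮(x)` satisfies `q̃(z|x_0) = q(z|x_0) · M(z|x_0)`, where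
`M(z|x_0) = Σ_d Σ_{w ≠ z^d} (q^d(w|x_0^d)/q^d(z^d|x_0^d)) S^d(z^d|w)/𝒮(w ∘ z^{∖d})`. -/
theorem auxiliary_law_eq_marginal_times_normalizer
    {D : ℕ} (hD : 1 ≤ D) {X : Fin D → Type*}
    [∀ d, Fintype (X d)] [∀ d, DecidableEq (X d)]
    (qd : ∀ d, X d → ℝ)  -- `qd d v = q^d(v | x_0^d)`
    (hqd_pos : ∀ d v, 0 < qd d v) (hqd_sum : ∀ d, ∑ v, qd d v = 1)
    (Sd : ∀ d, X d → X d → ℝ)  -- `Sd d b a = S^d(b | a)`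
    (hSd_pos : ∀ d b a, 0 < Sd d b a)
    (hSnorm_pos : ∀ x : ∀ d, X d, 0 < ∑ z, Sker Sd z x) :
    ∀ z : ∀ d, X d,
      (∑ x, (∏ d, qd d (x d)) * (Sker Sd z x / ∑ z', Sker Sd z' x))
        = (∏ d, qd d (z d))
            * ∑ d, ∑ w ∈ Finset.univ.erase (z d),
                (qd d w / qd d (z d)) * Sd d (z d) w
                  / ∑ z', Sker Sd z' (Function.update z d w) :=
  auxiliary_law_eq_marginal_times_normalizer_general qd hqd_pos Sd
end

section
/- Under the setup of the factorized forward marginals and single-coordinate-change proposal kernel: let q(x | x_0) = ∏_d q^d(x^d | x_0^d) with each q^d(· | x_0^d) strictly positive, S(z | x) = (1 − δ_{z,x}) Σ_d S^d(z^d | x^d) δ_{z^{∖d}, x^{∖d}} with S^d > 0, normalizer 𝒮(x) = Σ_z S(z | x) > 0, and M(z | x_0) = Σ_d Σ_{w ≠ z^d} (q^d(w | x_0^d)/q^d(z^d | x_0^d)) S^d(z^d | w)/𝒮(w ∘ z^{∖d}). Then for any function H : 𝒳 → ℝ, Σ_{x ∈ 𝒳} q(x | x_0) Σ_{z ∈ 𝒳}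 (S(z | x)/𝒮(x)) · (1/M(z | x_0)) · H(z) = Σ_{z ∈ 𝒳} q(z | x_0) H(z). In particular, the two-sample continuous-time VLB loss term E_{x∼q(·|x_0), z∼S(·|x)/𝒮(x)}[ (1/M(z|x_0)) Σ_d (Σ_w q^d(w|x_0^d) r^d(z^d|w) log g^d(w | z)) / q^d(z^d|x_0^d) ] equals the single-pass term E_{x∼q(·|x_0)}[ Σ_d (Σ_w q^d(w|x_0^d) r^d(x^d|w) log g^d(w | x)) / q^d(x^d|x_0^d) ] for any functions r^d and g^d for which the logarithms are defined. -/
/-- Normalization scalar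
`M(z|x_0) = Σ_d Σ_{w ≠ z^d} (q^d(w|x_0^d)/q^d(z^d|x_0^d)) S^d(z^d|w)/𝒮(w ∘ z^{∖d})`. -/
noncomputable def Mnorm {D : ℕ} {X : Fin D → Type*}
    [∀ d, Fintype (X d)] [∀ d, DecidableEq (X d)]
    (qd : ∀ d, X d → ℝ) (Sd : ∀ d, X d → X d → ℝ) (z : ∀ d, X d) : ℝ :=
  ∑ d, ∑ w ∈ Finset.univ.erase (z d),
    (qd d w / qd d (z d)) * Sd d (z d) w
      / ∑ z', Sker Sd z' (Function.update z d w)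

open Finset Function

theorem sum_mul_sum_mul_one_div_mul_eq {α β : Type*} [Fintype α] [Fintype β]
    (p : α → ℝ) (q m : β → ℝ) (K : β → α → ℝ)
    (hK : ∀ z, ∑ x, p x * K z x = q z * m z) (hm : ∀ z, m z ≠ 0) (H : β → ℝ) :
    ∑ x, p x * ∑ z, K z x * (1 / m z) * H z = ∑ z, q z * H z := by
  calc ∑ x, p x * ∑ z, K z x * (1 / m z) * H z
      = ∑ z, (∑ x, p x * K z x) * (1 / m z) * H z := by
        simp only [mul_sum, sum_mul]
        rw [sum_comm]
        exact sum_congr rfl fun _ _ => sum_congr rfl fun _ _ => by ring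
    _ = ∑ z, q z * H z := sum_congr rfl fun z _ => by
        rw [hK]
        field_simp [hm z]

section
variable {ι : Type*} [Fintype ι] [DecidableEq ι] {X : ι → Type*}

theorem sum_ite_ne_and_eq_update [∀ i, Fintype (X i)] [∀ i, DecidableEq (X i)]
    (x : ∀ i, X i) (i : ι) (G : (∀ i, X i) → ℝ) :
    ∑ y, (if y ≠ x ∧ y = update x i (y i) then G y else 0)
      = ∑ w ∈ univ.erase (x i), G (update x i w) := by
  have hfilter : ({y | y ≠ x ∧ y = update x i (y i)} : Finset (∀ i, X i))
      = (univ.erase (x i)).image (update x i) := by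
    ext y
    simp only [mem_filter, mem_univ, true_and, mem_image, mem_erase, and_true]
    constructor
    · rintro ⟨hyx, hy⟩
      refine ⟨y i, fun h => hyx ?_, hy.symm⟩
      rwa [h, update_eq_self] at hy
    · rintro ⟨w, hw, rfl⟩
      exact ⟨fun h => hw (by simpa using congrFun h i), by simp⟩
  rw [← sum_filter, hfilter, sum_image fun a _ b _ hab => update_injective x i hab]

theorem prod_apply_update {M : Type*} [CommGroupWithZero M] (f : ∀ i, X i → M)
    (x : ∀ i, X i) (i : ι) (w : X i) (hx : f i (x i) ≠ 0) :
    ∏ j, f j (update x i w j) = f i w / f i (x i) * ∏ j, f j (x j) := by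
  simp only [apply_update (fun j => f j), prod_update_of_mem (mem_univ i),
    ← mul_prod_erase univ (fun j => f j (x j)) (mem_univ i), sdiff_singleton_eq_erase]
  field_simp

end

section
variable {D : ℕ} {X : Fin D → Type*} [∀ d, Fintype (X d)] [∀ d, DecidableEq (X d)]
  (Sd : ∀ d, X d → X d → ℝ)

theorem mul_Sker_eq_sum_ite (F : (∀ d, X d) → ℝ) (z x : ∀ d, X d) :
    F x * Sker Sd z x
      = ∑ d, if x ≠ z ∧ x = update z d (x d) then F x * Sd d (z d) (x d) else 0 := by
  by_cases h : z = x
  · simp [Sker, h]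
  · simp [Sker, h, Ne.symm h, mul_sum, eq_update_iff, eq_comm]

theorem sum_mul_Sker (F : (∀ d, X d) → ℝ) (z : ∀ d, X d) :
    ∑ x, F x * Sker Sd z x
      = ∑ d, ∑ w ∈ univ.erase (z d), F (update z d w) * Sd d (z d) w := by
  simp only [mul_Sker_eq_sum_ite]
  rw [sum_comm]
  refine sum_congr rfl fun d _ => ?_
  rw [sum_ite_ne_and_eq_update z d fun x => F x * Sd d (z d) (x d)]
  simp only [update_self]

theorem exists_nonempty_erase_of_sum_Sker_ne_zero {x : ∀ d, X d}
    (hx : ∑ z, Sker Sd z x ≠ 0) : ∃ d, (univ.erase (x d)).Nonempty := by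
  obtain ⟨z, -, hz⟩ := exists_ne_zero_of_sum_ne_zero hx
  have hzx : z ≠ x := fun h => hz (by simp [Sker, h])
  obtain ⟨d, hd⟩ := ne_iff.mp hzx
  exact ⟨d, z d, mem_erase.mpr ⟨hd, mem_univ _⟩⟩

variable {Sd} {qd : ∀ d, X d → ℝ}

theorem Mnorm_pos (hqd : ∀ d v, 0 < qd d v) (hSd : ∀ d b a, 0 < Sd d b a)
    (hS : ∀ x, 0 < ∑ z, Sker Sd z x) (z : ∀ d, X d) : 0 < Mnorm qd Sd z := by
  have hterm : ∀ d, ∀ w ∈ univ.erase (z d), 0 < qd d w / qd d (z d) * Sd d (z d) w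
      / ∑ z', Sker Sd z' (update z d w) := fun d w _ =>
    div_pos (mul_pos (div_pos (hqd d w) (hqd d (z d))) (hSd d (z d) w)) (hS _)
  obtain ⟨d, hd⟩ := exists_nonempty_erase_of_sum_Sker_ne_zero Sd (hS z).ne'
  exact sum_pos' (fun d _ => sum_nonneg fun w hw => (hterm d w hw).le)
    ⟨d, mem_univ d, sum_pos (hterm d) hd⟩

theorem sum_prod_mul_Sker_div_eq_prod_mul_Mnorm (hqd : ∀ d v, qd d v ≠ 0) (z : ∀ d, X d) :
    ∑ x, (∏ d, qd d (x d)) * (Sker Sd z x / ∑ z', Sker Sd z' x)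
      = (∏ d, qd d (z d)) * Mnorm qd Sd z := by
  calc ∑ x, (∏ d, qd d (x d)) * (Sker Sd z x / ∑ z', Sker Sd z' x)
      = ∑ x, (∏ d, qd d (x d)) / (∑ z', Sker Sd z' x) * Sker Sd z x :=
        sum_congr rfl fun _ _ => by ring
    _ = (∏ d, qd d (z d)) * Mnorm qd Sd z := by
        simp only [sum_mul_Sker, Mnorm, mul_sum, prod_apply_update qd _ _ _ (hqd _ _)]
        exact sum_congr rfl fun _ _ => sum_congr rfl fun _ _ => by ring

end

theorem single_pass_vlb_general
    {D : ℕ} {X : Fin D → Type*}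
    [∀ d, Fintype (X d)] [∀ d, DecidableEq (X d)]
    (qd : ∀ d, X d → ℝ)  -- `qd d v = q^d(v | x_0^d)`
    (hqd_pos : ∀ d v, 0 < qd d v)
    (Sd : ∀ d, X d → X d → ℝ)  -- `Sd d b a = S^d(b | a)`
    (hSd_pos : ∀ d b a, 0 < Sd d b a)
    (hSnorm_pos : ∀ x : ∀ d, X d, 0 < ∑ z, Sker Sd z x) :
    (∀ H : (∀ d, X d) → ℝ,
      (∑ x, (∏ d, qd d (x d))
          * ∑ z, (Sker Sd z x / ∑ z', Sker Sd z' x) * (1 / Mnorm qd Sd z) * H z)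
        = ∑ z, (∏ d, qd d (z d)) * H z)
    ∧ ∀ (rd : ∀ d, X d → X d → ℝ) (gd : ∀ d, X d → (∀ e, X e) → ℝ),
      (∑ x, (∏ d, qd d (x d))
          * ∑ z, (Sker Sd z x / ∑ z', Sker Sd z' x) * (1 / Mnorm qd Sd z)
              * ∑ d, (∑ w, qd d w * rd d (z d) w * Real.log (gd d w z)) / qd d (z d))
        = ∑ x, (∏ d, qd d (x d))
            * ∑ d, (∑ w, qd d w * rd d (x d) w * Real.log (gd d w x)) / qd d (x d) := by
  have reweight := sum_mul_sum_mul_one_div_mul_eq _ _ _ _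
    (sum_prod_mul_Sker_div_eq_prod_mul_Mnorm fun d v => (hqd_pos d v).ne')
    fun z => (Mnorm_pos hqd_pos hSd_pos hSnorm_pos z).ne'
  exact ⟨reweight, fun _ _ => reweight _⟩

/-- Proposition 6: importance reweighting by `1/M(z|x_0)` turns the two-sample
expectation `E_{x∼q(·|x_0), z∼S(·|x)/𝒮(x)}` into the single-sample expectation
`E_{z∼q(·|x_0)}`; in particular the two-sample continuous-time VLB loss term
equals the single-pass term. -/
theorem single_pass_vlb
    {D : ℕ} (hD : 1 ≤ D) {X : Fin D → Type*}
    [∀ d, Fintype (X d)] [∀ d, DecidableEq (X d)]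
    (qd : ∀ d, X d → ℝ)  -- `qd d v = q^d(v | x_0^d)`
    (hqd_pos : ∀ d v, 0 < qd d v) (hqd_sum : ∀ d, ∑ v, qd d v = 1)
    (Sd : ∀ d, X d → X d → ℝ)  -- `Sd d b a = S^d(b | a)`
    (hSd_pos : ∀ d b a, 0 < Sd d b a)
    (hSnorm_pos : ∀ x : ∀ d, X d, 0 < ∑ z, Sker Sd z x) :
    (∀ H : (∀ d, X d) → ℝ,
      (∑ x, (∏ d, qd d (x d))
          * ∑ z, (Sker Sd z x / ∑ z', Sker Sd z' x) * (1 / Mnorm qd Sd z) * H z)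
        = ∑ z, (∏ d, qd d (z d)) * H z)
    ∧ ∀ (rd : ∀ d, X d → X d → ℝ) (gd : ∀ d, X d → (∀ e, X e) → ℝ),
      (∑ x, (∏ d, qd d (x d))
          * ∑ z, (Sker Sd z x / ∑ z', Sker Sd z' x) * (1 / Mnorm qd Sd z)
              * ∑ d, (∑ w, qd d w * rd d (z d) w * Real.log (gd d w z)) / qd d (z d))
        = ∑ x, (∏ d, qd d (x d))
            * ∑ d, (∑ w, qd d w * rd d (x d) w * Real.log (gd d w x)) / qd d (x d) :=
  single_pass_vlb_general qd hqd_pos Sd hSd_pos hSnorm_pos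
end
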